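/- arXiv:0806.0271 — 10 statements merged into one kernel-verified Lean document; each statement's English description precedes it below -/
import Mathlib

section
/- Let y, z : ℂ → ℂ be holomorphic. Define the 3×3 matrix-valued functions A(μ,t) = μ·[[0,1,0],[0,0,1],[0,0,0]] + [[−y(t), −z(t), −(4y(t)²+2t)],[0, y(t), z(t)],[1/4, 0, 0]] and U(μ,t) = 2·(μ·[[0,0,−1],[0,0,0],[0,0,0]] + [[0, −y(t), −z(t)],[−1/4, 0, −2y(t)],[0, −1/4, 0]]). Then the zero-curvature equation ∂A/∂t − ∂U/∂μ + A·U − U·A = 0 holds for all (μ,t) ∈ ℂ² if and only if y′(t) = z(t) and z′(t) = 6y(t)² + t for all t ∈ ℂ (i.e. iff y solves the first Painlevé equation y″ = 6y² + t). -/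
open Matrix Complex

noncomputable section

/-- The `λ`-coefficient matrix of the `JKT₁` pair (linear in the spectral parameter `μ`). -/
def A₀ (y z : ℂ → ℂ) (μ t : ℂ) : Matrix (Fin 3) (Fin 3) ℂ :=
  μ • (!![0,1,0; 0,0,1; 0,0,0] : Matrix (Fin 3) (Fin 3) ℂ) +
    !![-y t, -z t, -(4*(y t)^2 + 2*t); 0, y t, z t; 1/4, 0, 0]

/-- The `t`-coefficient matrix of the `JKT₁` pair. -/
def U₀ (y : ℂ → ℂ) (z : ℂ → ℂ) (μ t : ℂ) : Matrix (Fin 3) (Fin 3) ℂ :=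
  (2:ℂ) • (μ • (!![0,0,-1; 0,0,0; 0,0,0] : Matrix (Fin 3) (Fin 3) ℂ) +
    !![0, -y t, -z t; -1/4, 0, -2*y t; 0, -1/4, 0])

/-! The spectral parameter drops out of the curvature `∂ₜA - ∂_μU + [A, U]`, whose nonzero
entries are all multiples of `y' - z` or of `z' - (6y² + t)`. -/

section JKT

variable {y z : ℂ → ℂ} {μ t : ℂ}

lemma A₀_eq : A₀ y z μ t =
    !![-y t, μ - z t, -(4 * y t ^ 2 + 2 * t); 0, y t, μ + z t; 1/4, 0, 0] := by
  ext i j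
  fin_cases i <;> fin_cases j <;> simp [A₀]
  ring

lemma U₀_eq : U₀ y z μ t =
    !![0, -2 * y t, -2 * μ - 2 * z t; -(1/2), 0, -4 * y t; 0, -(1/2), 0] := by
  ext i j
  fin_cases i <;> fin_cases j <;> simp [U₀] <;> ring

lemma of_deriv_A₀ (hy : DifferentiableAt ℂ y t) :
    (of fun i j => deriv (fun s => A₀ y z μ s i j) t) =
      !![-deriv y t, -deriv z t, -(8 * y t * deriv y t + 2); 0, deriv y t, deriv z t; 0, 0, 0] := by
  have h02 : HasDerivAt (fun s => -(2 * s) + -(4 * y s ^ 2))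
      (-(2 * 1) + -(4 * ((2 : ℕ) * y t ^ (2 - 1) * deriv y t))) t :=
    ((hasDerivAt_id t).const_mul 2).neg.add ((hy.hasDerivAt.pow 2).const_mul 4).neg
  ext i j
  fin_cases i <;> fin_cases j <;> simp [A₀]
  rw [h02.deriv]
  push_cast
  ring

lemma of_deriv_U₀ :
    (of fun i j => deriv (fun m => U₀ y z m t i j) μ) = !![0, 0, -2; 0, 0, 0; 0, 0, 0] := by
  ext i j
  fin_cases i <;> fin_cases j <;> simp [U₀]

lemma zeroCurvature_A₀_U₀ (hy : DifferentiableAt ℂ y t) :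
    (of fun i j => deriv (fun s => A₀ y z μ s i j) t)
        - (of fun i j => deriv (fun m => U₀ y z m t i j) μ)
        + A₀ y z μ t * U₀ y z μ t - U₀ y z μ t * A₀ y z μ t =
      !![z t - deriv y t, 6 * y t ^ 2 + t - deriv z t, 8 * y t * (z t - deriv y t);
         0, deriv y t - z t, deriv z t - (6 * y t ^ 2 + t); 0, 0, 0] := by
  rw [of_deriv_A₀ hy, of_deriv_U₀, A₀_eq, U₀_eq, mul_fin_three, mul_fin_three]
  ext i j
  fin_cases i <;> fin_cases j <;> simp <;> ring

lemma zeroCurvature_A₀_U₀_eq_zero_iff (hy : DifferentiableAt ℂ y t) :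
    (of fun i j => deriv (fun s => A₀ y z μ s i j) t)
        - (of fun i j => deriv (fun m => U₀ y z m t i j) μ)
        + A₀ y z μ t * U₀ y z μ t - U₀ y z μ t * A₀ y z μ t = 0 ↔
      deriv y t = z t ∧ deriv z t = 6 * y t ^ 2 + t := by
  rw [zeroCurvature_A₀_U₀ hy, ← Matrix.ext_iff]
  constructor
  · intro h
    exact ⟨(sub_eq_zero.mp (by simpa using h 0 0)).symm,
      (sub_eq_zero.mp (by simpa using h 0 1)).symm⟩
  · rintro ⟨hy', hz'⟩ i j
    fin_cases i <;> fin_cases j <;> simp [hy', hz']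

end JKT

theorem stmt_0_general (y z : ℂ → ℂ) (hy : Differentiable ℂ y) :
    (∀ μ t : ℂ,
      (Matrix.of fun i j => deriv (fun s => A₀ y z μ s i j) t)
        - (Matrix.of fun i j => deriv (fun m => U₀ y z m t i j) μ)
        + A₀ y z μ t * U₀ y z μ t - U₀ y z μ t * A₀ y z μ t = 0)
    ↔ (∀ t : ℂ, deriv y t = z t ∧ deriv z t = 6 * (y t)^2 + t) := by
  simp only [fun μ t => zeroCurvature_A₀_U₀_eq_zero_iff (z := z) (μ := μ) (hy t)]
  exact ⟨fun h => h 0, fun h _ => h⟩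

/-- The zero-curvature equation for the `JKT₁` pair holds identically in `(μ,t)`
iff `y' = z` and `z' = 6 y² + t`, i.e. iff `y` solves the first Painlevé equation. -/
theorem stmt_0 (y z : ℂ → ℂ) (hy : Differentiable ℂ y) (hz : Differentiable ℂ z) :
    (∀ μ t : ℂ,
      (Matrix.of fun i j => deriv (fun s => A₀ y z μ s i j) t)
        - (Matrix.of fun i j => deriv (fun m => U₀ y z m t i j) μ)
        + A₀ y z μ t * U₀ y z μ t - U₀ y z μ t * A₀ y z μ t = 0)
    ↔ (∀ t : ℂ, deriv y t = z t ∧ deriv z t = 6 * (y t)^2 + t) :=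
  stmt_0_general y z hy
end
end

section
/- Let y, z : ℂ → ℂ be holomorphic, and let Φ = (Φ₁,Φ₂,Φ₃) : ℂ×ℂ → ℂ³ be holomorphic in (λ,t) and satisfy the degenerate system [[0,1,0],[0,0,1],[0,0,0]]·∂Φ/∂λ = (−λ·I₃ + [[−y, −z, −(4y²+2t)],[0, y, z],[1/4, 0, 0]])·Φ and ∂Φ/∂t = 2·(λ·[[0,−1,0],[0,0,0],[0,0,0]] + [[0,0,0],[−1/4,0,−2y],[0,−1/4,0]])·Φ. Then Φ₁(λ,t) = 4λ·Φ₃(λ,t) for all (λ,t), and the vector Y := (−Φ₂/4, Φ₃)ᵀ satisfies the Jimbo–Miwa pair for the first Painlevé equation: ∂Y/∂λ = (λ²·[[0,1],[0,0]] + λ·[[0,y],[4,0]] + [[−z, y²+t/2],[−4y, z]])·Y and ∂Y/∂t = ((λ/2)·[[0,1],[0,0]] + [[0,y],[2,0]])·Y. -/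
/-!
The leading matrix of the λ-equation has zero last row, so that row is an algebraic constraint,
`Φ₁ = 4λΦ₃`. Substituting it into the remaining rows of the λ- and t-equations, the equations for
`Φ₂` and `Φ₃` become exactly the Jimbo–Miwa pair for `(−Φ₂/4, Φ₃)`.
-/

open Matrix

theorem components_of_degenerate_lam_system {l a b c : ℂ} {v φ : Fin 3 → ℂ}
    (h : (!![0,1,0; 0,0,1; 0,0,0] : Matrix (Fin 3) (Fin 3) ℂ).mulVec v =
      ((-l) • (1 : Matrix (Fin 3) (Fin 3) ℂ) + !![-a, -b, -c; 0, a, b; 1/4, 0, 0]).mulVec φ) :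
    v 1 = -(l + a) * φ 0 - b * φ 1 - c * φ 2 ∧ v 2 = (a - l) * φ 1 + b * φ 2 ∧
      φ 0 = 4 * l * φ 2 := by
  have h0 := congrFun h 0
  have h1 := congrFun h 1
  have h2 := congrFun h 2
  simp [mulVec, dotProduct, Fin.sum_univ_three, one_apply] at h0 h1 h2
  exact ⟨by linear_combination h0, by linear_combination h1, by linear_combination -4 * h2⟩

theorem components_of_t_system {l c : ℂ} {v φ : Fin 3 → ℂ}
    (h : v = ((2:ℂ) • (l • (!![0,-1,0; 0,0,0; 0,0,0] : Matrix (Fin 3) (Fin 3) ℂ) +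
      !![0,0,0; -1/4, 0, -2 * c; 0, -1/4, 0])).mulVec φ) :
    v 1 = -φ 0 / 2 - 4 * c * φ 2 ∧ v 2 = -φ 1 / 2 := by
  have h1 := congrFun h 1
  have h2 := congrFun h 2
  simp [mulVec, dotProduct, Fin.sum_univ_three] at h1 h2
  exact ⟨by linear_combination h1, by linear_combination h2⟩

theorem deriv_vecCons_two {𝕜 F : Type*} [NontriviallyNormedField 𝕜] [NormedAddCommGroup F]
    [NormedSpace 𝕜 F] (f g : 𝕜 → F) (x : 𝕜) :
    (fun i => deriv (fun w => ![f w, g w] i) x) = ![deriv f x, deriv g x] := by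
  ext i
  fin_cases i <;> rfl

theorem stmt_1_general (y z : ℂ → ℂ)
    (Φ : ℂ → ℂ → Fin 3 → ℂ)
    (hlam : ∀ l t : ℂ,
      (!![0,1,0; 0,0,1; 0,0,0] : Matrix (Fin 3) (Fin 3) ℂ).mulVec
          (fun i => deriv (fun w => Φ w t i) l) =
        ((-l) • (1 : Matrix (Fin 3) (Fin 3) ℂ) +
          !![-y t, -z t, -(4*(y t)^2 + 2*t); 0, y t, z t; 1/4, 0, 0]).mulVec (Φ l t))
    (ht : ∀ l t : ℂ,
      (fun i => deriv (fun s => Φ l s i) t) =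
        ((2:ℂ) • (l • (!![0,-1,0; 0,0,0; 0,0,0] : Matrix (Fin 3) (Fin 3) ℂ) +
          !![0,0,0; -1/4, 0, -2*y t; 0, -1/4, 0])).mulVec (Φ l t)) :
    (∀ l t : ℂ, Φ l t 0 = 4 * l * Φ l t 2) ∧
    (∀ Y : ℂ → ℂ → Fin 2 → ℂ,
      (∀ l t : ℂ, Y l t = ![-(Φ l t 1)/4, Φ l t 2]) →
      (∀ l t : ℂ,
        (fun i => deriv (fun w => Y w t i) l) =
          (l^2 • (!![0,1; 0,0] : Matrix (Fin 2) (Fin 2) ℂ) + l • !![0, y t; 4, 0] +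
            !![-z t, (y t)^2 + t/2; -4*y t, z t]).mulVec (Y l t)) ∧
      (∀ l t : ℂ,
        (fun i => deriv (fun s => Y l s i) t) =
          ((l/2) • (!![0,1; 0,0] : Matrix (Fin 2) (Fin 2) ℂ) +
            !![0, y t; 2, 0]).mulVec (Y l t))) := by
  have constraint l t := (components_of_degenerate_lam_system (hlam l t)).2.2
  refine ⟨constraint, fun Y hY => ⟨fun l t => ?_, fun l t => ?_⟩⟩
  · obtain ⟨hΦ₂, hΦ₃, -⟩ := components_of_degenerate_lam_system (hlam l t)
    simp only [hY]
    rw [deriv_vecCons_two, deriv_div_const, deriv.fun_neg, hΦ₂, hΦ₃, constraint]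
    ext i
    fin_cases i <;> simp [mulVec, dotProduct, Fin.sum_univ_two] <;> ring
  · obtain ⟨hΦ₂, hΦ₃⟩ := components_of_t_system (ht l t)
    simp only [hY]
    rw [deriv_vecCons_two, deriv_div_const, deriv.fun_neg, hΦ₂, hΦ₃, constraint]
    ext i
    fin_cases i <;> simp [mulVec, dotProduct, Fin.sum_univ_two] <;> ring

/-- If `Φ` is a holomorphic solution of the degenerate pair `dJKT₁`, then
`Φ₁ = 4λ Φ₃` and `Y := (−Φ₂/4, Φ₃)ᵀ` solves the Jimbo–Miwa pair `JM₁` for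
the first Painlevé equation. -/
theorem stmt_1 (y z : ℂ → ℂ) (hy : Differentiable ℂ y) (hz : Differentiable ℂ z)
    (Φ : ℂ → ℂ → Fin 3 → ℂ)
    (hΦ : ∀ i, Differentiable ℂ (fun p : ℂ × ℂ => Φ p.1 p.2 i))
    (hlam : ∀ l t : ℂ,
      (!![0,1,0; 0,0,1; 0,0,0] : Matrix (Fin 3) (Fin 3) ℂ).mulVec
          (fun i => deriv (fun w => Φ w t i) l) =
        ((-l) • (1 : Matrix (Fin 3) (Fin 3) ℂ) +
          !![-y t, -z t, -(4*(y t)^2 + 2*t); 0, y t, z t; 1/4, 0, 0]).mulVec (Φ l t))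
    (ht : ∀ l t : ℂ,
      (fun i => deriv (fun s => Φ l s i) t) =
        ((2:ℂ) • (l • (!![0,-1,0; 0,0,0; 0,0,0] : Matrix (Fin 3) (Fin 3) ℂ) +
          !![0,0,0; -1/4, 0, -2*y t; 0, -1/4, 0])).mulVec (Φ l t)) :
    (∀ l t : ℂ, Φ l t 0 = 4 * l * Φ l t 2) ∧
    (∀ Y : ℂ → ℂ → Fin 2 → ℂ,
      (∀ l t : ℂ, Y l t = ![-(Φ l t 1)/4, Φ l t 2]) →
      (∀ l t : ℂ,
        (fun i => deriv (fun w => Y w t i) l) =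
          (l^2 • (!![0,1; 0,0] : Matrix (Fin 2) (Fin 2) ℂ) + l • !![0, y t; 4, 0] +
            !![-z t, (y t)^2 + t/2; -4*y t, z t]).mulVec (Y l t)) ∧
      (∀ l t : ℂ,
        (fun i => deriv (fun s => Y l s i) t) =
          ((l/2) • (!![0,1; 0,0] : Matrix (Fin 2) (Fin 2) ℂ) +
            !![0, y t; 2, 0]).mulVec (Y l t))) :=
  stmt_1_general y z Φ hlam ht
end

section
/- Let y, z : ℂ → ℂ be holomorphic with y′(t) = z(t) and z′(t) = 6y(t)² + t for all t. Let Ω ⊆ ℂ² be open with λ ≠ y(t) for all (λ,t) ∈ Ω, let Y = (Y₁,Y₂) : Ω → ℂ² be a holomorphic solution of the JM₁ pair, and let s : Ω → ℂ be holomorphic with s(λ,t)² = λ − y(t) on Ω. Define V := Y₂/s. Then on Ω: ∂²V/∂λ² = (3/(4(λ−y)²) − z/(λ−y) + 4λ³ + 2tλ + z² − 4y³ − 2ty)·V and ∂V/∂t = (1/(2(λ−y)))·∂V/∂λ + (1/(4(λ−y)²))·V, i.e. V satisfies the Garnier pair G₁ for the first Painlevé equation (with y′ = z). -/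
open Filter Topology

/-!
Differentiating `s² = λ - y(t)` gives `∂_λ s = 1/(2s)` and `∂_t s = -z/(2s)`. The second row of
`JM₁` reads `∂_λ Y₂ = 4(λ - y) Y₁ + z Y₂` and `∂_t Y₂ = 2 Y₁`, so the quotient rule gives
`∂_λ V = 4 s Y₁ + z V - V/(2s²)` and `∂_t V = 2 Y₁/s + z V/(2s²)`; eliminating `Y₁` between them is
the `t`-equation. Differentiating `∂_λ V` once more, with the first row for `∂_λ Y₁`, the terms in
`Y₁` cancel, and substituting `λ = s² + y` leaves the `λ`-equation.
-/

section Calculus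

variable {𝕜 E F G : Type*} [NontriviallyNormedField 𝕜] [NormedAddCommGroup E] [NormedSpace 𝕜 E]
  [NormedAddCommGroup F] [NormedSpace 𝕜 F] [NormedAddCommGroup G] [NormedSpace 𝕜 G]

theorem DifferentiableAt.curry_left {f : E × F → G} {p : E × F} (hf : DifferentiableAt 𝕜 f p) :
    DifferentiableAt 𝕜 (fun x => f (x, p.2)) p.1 := by
  fun_prop

theorem DifferentiableAt.curry_right {f : E × F → G} {p : E × F} (hf : DifferentiableAt 𝕜 f p) :
    DifferentiableAt 𝕜 (fun y => f (p.1, y)) p.2 := by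
  fun_prop

theorem DifferentiableAt.hasDerivAt_of_sq_eventuallyEq [CharZero 𝕜] {s g : 𝕜 → 𝕜} {g' x : 𝕜}
    (hs : DifferentiableAt 𝕜 s x) (hx : s x ≠ 0) (hsg : (fun w => s w ^ 2) =ᶠ[𝓝 x] g)
    (hg : HasDerivAt g g' x) : HasDerivAt s (g' / (2 * s x)) x := by
  rw [hg.unique ((hs.hasDerivAt.pow 2).congr_of_eventuallyEq hsg.symm), Nat.cast_ofNat, pow_one,
    mul_div_cancel_left₀ _ (mul_ne_zero two_ne_zero hx)]
  exact hs.hasDerivAt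

end Calculus

theorem jmLambda_mulVec (l y z t : ℂ) (v : Fin 2 → ℂ) :
    (l ^ 2 • (!![0, 1; 0, 0] : Matrix (Fin 2) (Fin 2) ℂ) + l • !![0, y; 4, 0] +
      !![-z, y ^ 2 + t / 2; -4 * y, z]).mulVec v =
      ![-z * v 0 + (l ^ 2 + l * y + y ^ 2 + t / 2) * v 1, 4 * (l - y) * v 0 + z * v 1] := by
  ext i
  fin_cases i <;>
    simp only [Matrix.mulVec, dotProduct, Fin.sum_univ_two, Matrix.add_apply, Matrix.smul_apply,
      smul_eq_mul, Matrix.of_apply, Matrix.cons_val', Matrix.cons_val_zero, Matrix.cons_val_one,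
      Matrix.empty_val', Matrix.cons_val_fin_one, Fin.zero_eta, Fin.mk_one] <;>
    ring

theorem jmT_mulVec (l y : ℂ) (v : Fin 2 → ℂ) :
    ((l / 2) • (!![0, 1; 0, 0] : Matrix (Fin 2) (Fin 2) ℂ) + !![0, y; 2, 0]).mulVec v =
      ![(l / 2 + y) * v 1, 2 * v 0] := by
  ext i
  fin_cases i <;> simp [Matrix.mulVec, dotProduct]

theorem hasDerivAt_div_sqrt_lambda {Y₁ Y₂ s : ℂ → ℂ} {l y z : ℂ}
    (hY₂ : HasDerivAt Y₂ (4 * (l - y) * Y₁ l + z * Y₂ l) l)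
    (hs : HasDerivAt s (1 / (2 * s l)) l) (hs2 : s l ^ 2 = l - y) (hsl : s l ≠ 0) :
    HasDerivAt (fun w => Y₂ w / s w)
      (4 * s l * Y₁ l + z * (Y₂ l / s l) - Y₂ l / s l / (2 * (l - y))) l := by
  refine (hY₂.fun_div hs hsl).congr_deriv ?_
  rw [← hs2]
  field_simp

theorem deriv_deriv_div_sqrt_lambda {Y₁ Y₂ s : ℂ → ℂ} {U : Set ℂ} {l y z t : ℂ}
    (hU : IsOpen U) (hl : l ∈ U)
    (hY₁ : ∀ w ∈ U, HasDerivAt Y₁ (-z * Y₁ w + (w ^ 2 + w * y + y ^ 2 + t / 2) * Y₂ w) w)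
    (hY₂ : ∀ w ∈ U, HasDerivAt Y₂ (4 * (w - y) * Y₁ w + z * Y₂ w) w)
    (hs : ∀ w ∈ U, HasDerivAt s (1 / (2 * s w)) w) (hs2 : ∀ w ∈ U, s w ^ 2 = w - y)
    (hs0 : ∀ w ∈ U, s w ≠ 0) :
    deriv (fun w => deriv (fun w' => Y₂ w' / s w') w) l =
      (3 / (4 * (l - y) ^ 2) - z / (l - y) + 4 * l ^ 3 + 2 * t * l
        + z ^ 2 - 4 * y ^ 3 - 2 * t * y) * (Y₂ l / s l) := by
  have hV : ∀ w ∈ U, HasDerivAt (fun w => Y₂ w / s w)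
      (4 * s w * Y₁ w + z * (Y₂ w / s w) - Y₂ w / s w / (2 * (w - y))) w := fun w hw =>
    hasDerivAt_div_sqrt_lambda (hY₂ w hw) (hs w hw) (hs2 w hw) (hs0 w hw)
  have hV' : deriv (fun w => Y₂ w / s w) =ᶠ[𝓝 l]
      fun w => 4 * s w * Y₁ w + z * (Y₂ w / s w) - Y₂ w / s w / (2 * (w - y)) := by
    filter_upwards [hU.mem_nhds hl] with w hw using (hV w hw).deriv
  have hden : 2 * (l - y) ≠ 0 := mul_ne_zero two_ne_zero (hs2 l hl ▸ pow_ne_zero 2 (hs0 l hl))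
  have hsecond :=
    ((((hs l hl).const_mul 4).fun_mul (hY₁ l hl)).fun_add ((hV l hl).const_mul z)).fun_sub
      ((hV l hl).fun_div (((hasDerivAt_id' l).sub_const y).const_mul 2) hden)
  rw [hV'.deriv_eq, hsecond.deriv]
  have hsl := hs0 l hl
  have hsq := hs2 l hl
  generalize s l = S at hsl hsq ⊢
  obtain rfl : l = S ^ 2 + y := by rw [hsq]; ring
  field_simp
  ring

theorem deriv_div_sqrt_t {Y₂ s : ℂ → ℂ} {t l y z a : ℂ} (hY₂ : HasDerivAt Y₂ (2 * a) t)
    (hs : HasDerivAt s (-z / (2 * s t)) t) (hs2 : s t ^ 2 = l - y) (hs0 : s t ≠ 0) :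
    deriv (fun u => Y₂ u / s u) t =
      1 / (2 * (l - y)) * (4 * s t * a + z * (Y₂ t / s t) - Y₂ t / s t / (2 * (l - y)))
        + 1 / (4 * (l - y) ^ 2) * (Y₂ t / s t) := by
  rw [(hY₂.fun_div hs hs0).deriv, ← hs2]
  field_simp
  ring

theorem stmt_2_general (y z : ℂ → ℂ) (hy : Differentiable ℂ y)
    (hy' : ∀ t : ℂ, deriv y t = z t)
    (Ω : Set (ℂ × ℂ)) (hΩ : IsOpen Ω)
    (hne : ∀ p ∈ Ω, p.1 ≠ y p.2)
    (Y : ℂ → ℂ → Fin 2 → ℂ)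
    (hYdiff : ∀ i, DifferentiableOn ℂ (fun p : ℂ × ℂ => Y p.1 p.2 i) Ω)
    (hYlam : ∀ l t : ℂ, (l, t) ∈ Ω →
      (fun i => deriv (fun w => Y w t i) l) =
        (l^2 • (!![0,1; 0,0] : Matrix (Fin 2) (Fin 2) ℂ) + l • !![0, y t; 4, 0] +
          !![-z t, (y t)^2 + t/2; -4*y t, z t]).mulVec (Y l t))
    (hYt : ∀ l t : ℂ, (l, t) ∈ Ω →
      (fun i => deriv (fun s => Y l s i) t) =
        ((l/2) • (!![0,1; 0,0] : Matrix (Fin 2) (Fin 2) ℂ) +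
          !![0, y t; 2, 0]).mulVec (Y l t))
    (s : ℂ → ℂ → ℂ)
    (hs : DifferentiableOn ℂ (fun p : ℂ × ℂ => s p.1 p.2) Ω)
    (hs2 : ∀ l t : ℂ, (l, t) ∈ Ω → (s l t)^2 = l - y t)
    (V : ℂ → ℂ → ℂ)
    (hV : ∀ l t : ℂ, V l t = Y l t 1 / s l t) :
    ∀ l t : ℂ, (l, t) ∈ Ω →
      (deriv (fun w => deriv (fun w' => V w' t) w) l =
        (3/(4*(l - y t)^2) - z t/(l - y t) + 4*l^3 + 2*t*l
          + (z t)^2 - 4*(y t)^3 - 2*t*(y t)) * V l t) ∧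
      (deriv (fun s' => V l s') t =
        (1/(2*(l - y t))) * deriv (fun w => V w t) l + (1/(4*(l - y t)^2)) * V l t) := by
  intro l t hmem
  obtain rfl : V = fun l t => Y l t 1 / s l t := funext₂ hV
  beta_reduce
  have hs0 {w u : ℂ} (h : (w, u) ∈ Ω) : s w u ≠ 0 := fun h0 =>
    sub_ne_zero.2 (hne _ h) (by simpa [h0] using (hs2 w u h).symm)
  set U := {w | (w, t) ∈ Ω}
  have hU : IsOpen U := hΩ.preimage (Continuous.prodMk_left t)
  have hsLam : ∀ w ∈ U, HasDerivAt (fun w => s w t) (1 / (2 * s w t)) w := fun w hw =>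
    (hs.differentiableAt (hΩ.mem_nhds hw)).curry_left.hasDerivAt_of_sq_eventuallyEq (hs0 hw)
      (by filter_upwards [hU.mem_nhds hw] with w' hw' using hs2 w' t hw')
      ((hasDerivAt_id' w).sub_const (y t))
  have hYLam (i : Fin 2) {w : ℂ} (hw : w ∈ U) : HasDerivAt (fun w => Y w t i)
      (![-z t * Y w t 0 + (w ^ 2 + w * y t + y t ^ 2 + t / 2) * Y w t 1,
        4 * (w - y t) * Y w t 0 + z t * Y w t 1] i) w :=
    ((hYdiff i).differentiableAt (hΩ.mem_nhds hw)).curry_left.hasDerivAt.congr_deriv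
      ((congrFun (hYlam w t hw) i).trans (congrFun (jmLambda_mulVec w (y t) (z t) t (Y w t)) i))
  have hYt₁ : HasDerivAt (fun u => Y l u 1) (2 * Y l t 0) t :=
    ((hYdiff 1).differentiableAt (hΩ.mem_nhds hmem)).curry_right.hasDerivAt.congr_deriv
      ((congrFun (hYt l t hmem) 1).trans (congrFun (jmT_mulVec l (y t) (Y l t)) 1))
  have hst : HasDerivAt (fun u => s l u) (-z t / (2 * s l t)) t :=
    (hs.differentiableAt (hΩ.mem_nhds hmem)).curry_right.hasDerivAt_of_sq_eventuallyEq (hs0 hmem)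
      (by filter_upwards [(hΩ.preimage (Continuous.prodMk_right l)).mem_nhds hmem] with u hu
            using hs2 l u hu)
      (by simpa [hy'] using (hy t).hasDerivAt.const_sub l)
  refine ⟨deriv_deriv_div_sqrt_lambda hU hmem (fun w hw => hYLam 0 hw) (fun w hw => hYLam 1 hw)
    hsLam (fun w hw => hs2 w t hw) (fun w hw => hs0 hw), ?_⟩
  rw [(hasDerivAt_div_sqrt_lambda (Y₁ := fun w => Y w t 0) (hYLam 1 hmem) (hsLam l hmem)
    (hs2 l t hmem) (hs0 hmem)).deriv]
  exact deriv_div_sqrt_t hYt₁ hst (hs2 l t hmem) (hs0 hmem)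

/-- If `Y` solves the Jimbo–Miwa pair `JM₁` on an open set `Ω` avoiding `λ = y(t)`,
`y' = z`, `z' = 6y² + t`, and `s² = λ − y(t)`, then `V := Y₂/s` solves the scalar
Garnier pair `G₁` for the first Painlevé equation on `Ω`. -/
theorem stmt_2 (y z : ℂ → ℂ) (hy : Differentiable ℂ y) (hz : Differentiable ℂ z)
    (hy' : ∀ t : ℂ, deriv y t = z t) (hz' : ∀ t : ℂ, deriv z t = 6 * (y t)^2 + t)
    (Ω : Set (ℂ × ℂ)) (hΩ : IsOpen Ω)
    (hne : ∀ p ∈ Ω, p.1 ≠ y p.2)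
    (Y : ℂ → ℂ → Fin 2 → ℂ)
    (hYdiff : ∀ i, DifferentiableOn ℂ (fun p : ℂ × ℂ => Y p.1 p.2 i) Ω)
    (hYlam : ∀ l t : ℂ, (l, t) ∈ Ω →
      (fun i => deriv (fun w => Y w t i) l) =
        (l^2 • (!![0,1; 0,0] : Matrix (Fin 2) (Fin 2) ℂ) + l • !![0, y t; 4, 0] +
          !![-z t, (y t)^2 + t/2; -4*y t, z t]).mulVec (Y l t))
    (hYt : ∀ l t : ℂ, (l, t) ∈ Ω →
      (fun i => deriv (fun s => Y l s i) t) =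
        ((l/2) • (!![0,1; 0,0] : Matrix (Fin 2) (Fin 2) ℂ) +
          !![0, y t; 2, 0]).mulVec (Y l t))
    (s : ℂ → ℂ → ℂ)
    (hs : DifferentiableOn ℂ (fun p : ℂ × ℂ => s p.1 p.2) Ω)
    (hs2 : ∀ l t : ℂ, (l, t) ∈ Ω → (s l t)^2 = l - y t)
    (V : ℂ → ℂ → ℂ)
    (hV : ∀ l t : ℂ, V l t = Y l t 1 / s l t) :
    ∀ l t : ℂ, (l, t) ∈ Ω →
      (deriv (fun w => deriv (fun w' => V w' t) w) l =
        (3/(4*(l - y t)^2) - z t/(l - y t) + 4*l^3 + 2*t*l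
          + (z t)^2 - 4*(y t)^3 - 2*t*(y t)) * V l t) ∧
      (deriv (fun s' => V l s') t =
        (1/(2*(l - y t))) * deriv (fun w => V w t) l + (1/(4*(l - y t)^2)) * V l t) :=
  stmt_2_general y z hy hy' Ω hΩ hne Y hYdiff hYlam hYt s hs hs2 V hV
end

section
/- Let y, z : ℂ → ℂ be holomorphic and let Y : ℂ×ℂ → ℂ² (or 2×2 matrices) be a holomorphic solution of the JM₁ pair. Define Z(ζ,t) := [[1, ζ/2],[0,1]]·Y(ζ², t). Then Z satisfies the Fabri-transformed system ∂Z/∂ζ = (4ζ⁴·[[1,0],[0,−1]] + ζ³·[[0,4y],[8,0]] + ζ²·[[−4y,2z],[0,4y]] + ζ·[[−2z, 2y²+t],[−8y, 2z]] + [[0,1/2],[0,0]])·Z and ∂Z/∂t = (ζ·[[1,0],[0,−1]] + [[0,y],[2,0]])·Z, together with the reflection identity Z(−ζ,t) = [[1,−ζ],[0,1]]·Z(ζ,t) for all (ζ,t) ∈ ℂ². -/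
/-!
Substituting `λ = ζ²` multiplies the λ-equation by `dλ/dζ = 2ζ`, and the gauge factor
`G(ζ) = [[1, ζ/2], [0, 1]]` turns a solution `Y` of `Y' = A Y` into `Z = G Y` with
`Z' = B Z` exactly when `B G = G' + G A`. Both transformed equations are therefore
`2 × 2` matrix identities, and the reflection identity is `G(-ζ) = [[1, -ζ], [0, 1]] G(ζ)`,
since `(-ζ)² = ζ²`.
-/

open Matrix

noncomputable section

section MulVec

variable {𝕜 : Type*} [NontriviallyNormedField 𝕜] {m n : Type*}

theorem hasDerivAt_of_deriv_apply_eq {f : 𝕜 → n → 𝕜} {f' : n → 𝕜} {x : 𝕜}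
    (hf : ∀ i, DifferentiableAt 𝕜 (fun w => f w i) x)
    (h : (fun i => deriv (fun w => f w i) x) = f') : HasDerivAt f f' x :=
  hasDerivAt_pi.2 fun i => h ▸ (hf i).hasDerivAt

theorem HasDerivAt.deriv_apply_eq {f : 𝕜 → n → 𝕜} {f' : n → 𝕜} {x : 𝕜}
    (h : HasDerivAt f f' x) : (fun i => _root_.deriv (fun w => f w i) x) = f' :=
  funext fun i => (hasDerivAt_pi.1 h i).deriv

theorem HasDerivAt.matrix_mulVec [Fintype n] {M : 𝕜 → Matrix m n 𝕜} {M' : Matrix m n 𝕜}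
    {v : 𝕜 → n → 𝕜} {v' : n → 𝕜} {x : 𝕜}
    (hM : ∀ i j, HasDerivAt (fun w => M w i j) (M' i j) x) (hv : HasDerivAt v v' x) :
    HasDerivAt (fun w => M w *ᵥ v w) (M' *ᵥ v x + M x *ᵥ v') x := by
  refine hasDerivAt_pi.2 fun i => ?_
  have := HasDerivAt.fun_sum (u := Finset.univ) fun j _ => (hM i j).mul (hasDerivAt_pi.1 hv j)
  simpa [mulVec, dotProduct, Finset.sum_add_distrib] using this

theorem HasDerivAt.gauge_mulVec [Fintype n] {M : 𝕜 → Matrix n n 𝕜} {M' A B : Matrix n n 𝕜}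
    {Y : 𝕜 → n → 𝕜} {x : 𝕜}
    (hM : ∀ i j, HasDerivAt (fun w => M w i j) (M' i j) x) (hY : HasDerivAt Y (A *ᵥ Y x) x)
    (hB : B * M x = M' + M x * A) :
    HasDerivAt (fun w => M w *ᵥ Y w) (B *ᵥ (M x *ᵥ Y x)) x := by
  convert HasDerivAt.matrix_mulVec hM hY using 1
  rw [mulVec_mulVec, hB, add_mulVec, mulVec_mulVec]

end MulVec

section JimboMiwa

-- `a`, `b` stand for the values `y t`, `z t` of the coefficient functions.
variable (a b t l ζ : ℂ)

def jmLambdaMatrix : Matrix (Fin 2) (Fin 2) ℂ :=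
  l^2 • !![0,1; 0,0] + l • !![0, a; 4, 0] + !![-b, a^2 + t/2; -4*a, b]

def jmTimeMatrix : Matrix (Fin 2) (Fin 2) ℂ :=
  (l/2) • !![0,1; 0,0] + !![0, a; 2, 0]

def fabriGauge : Matrix (Fin 2) (Fin 2) ℂ := !![1, ζ/2; 0, 1]

def fabriZetaMatrix : Matrix (Fin 2) (Fin 2) ℂ :=
  (4*ζ^4) • !![1,0; 0,-1] + ζ^3 • !![0, 4*a; 8, 0] + ζ^2 • !![-4*a, 2*b; 0, 4*a]
    + ζ • !![-2*b, 2*a^2 + t; -8*a, 2*b] + !![0, 1/2; 0, 0]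

def fabriTimeMatrix : Matrix (Fin 2) (Fin 2) ℂ := ζ • !![1,0; 0,-1] + !![0, a; 2, 0]

theorem hasDerivAt_fabriGauge_apply (i j : Fin 2) :
    HasDerivAt (fun w => fabriGauge w i j) ((!![0, 1/2; 0, 0] : Matrix (Fin 2) (Fin 2) ℂ) i j) ζ := by
  fin_cases i <;> fin_cases j <;> simp only [fabriGauge] <;> simp [hasDerivAt_const]
  simpa using (hasDerivAt_id ζ).div_const 2

theorem fabriZetaMatrix_mul_fabriGauge :
    fabriZetaMatrix a b t ζ * fabriGauge ζ =
      !![0, 1/2; 0, 0] + fabriGauge ζ * ((2 * ζ) • jmLambdaMatrix a b t (ζ^2)) := by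
  ext i j
  fin_cases i <;> fin_cases j <;>
    simp [fabriZetaMatrix, fabriGauge, jmLambdaMatrix, mul_apply, Fin.sum_univ_two] <;> ring

theorem fabriTimeMatrix_mul_fabriGauge :
    fabriTimeMatrix a ζ * fabriGauge ζ = fabriGauge ζ * jmTimeMatrix a (ζ^2) := by
  ext i j
  fin_cases i <;> fin_cases j <;>
    simp [fabriTimeMatrix, fabriGauge, jmTimeMatrix, mul_apply, Fin.sum_univ_two] <;> ring

theorem fabriGauge_neg : fabriGauge (-ζ) = !![1, -ζ; 0, 1] * fabriGauge ζ := by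
  ext i j
  fin_cases i <;> fin_cases j <;> simp [fabriGauge]; ring

end JimboMiwa

theorem stmt_3_general (y z : ℂ → ℂ)
    (Y : ℂ → ℂ → Fin 2 → ℂ)
    (hYdiff : ∀ i, Differentiable ℂ (fun p : ℂ × ℂ => Y p.1 p.2 i))
    (hYlam : ∀ l t : ℂ,
      (fun i => deriv (fun w => Y w t i) l) =
        (l^2 • (!![0,1; 0,0] : Matrix (Fin 2) (Fin 2) ℂ) + l • !![0, y t; 4, 0] +
          !![-z t, (y t)^2 + t/2; -4*y t, z t]).mulVec (Y l t))
    (hYt : ∀ l t : ℂ,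
      (fun i => deriv (fun s => Y l s i) t) =
        ((l/2) • (!![0,1; 0,0] : Matrix (Fin 2) (Fin 2) ℂ) +
          !![0, y t; 2, 0]).mulVec (Y l t))
    (Z : ℂ → ℂ → Fin 2 → ℂ)
    (hZ : ∀ ζ t : ℂ,
      Z ζ t = (!![1, ζ/2; 0, 1] : Matrix (Fin 2) (Fin 2) ℂ).mulVec (Y (ζ^2) t)) :
    (∀ ζ t : ℂ,
      (fun i => deriv (fun w => Z w t i) ζ) =
        ((4*ζ^4) • (!![1,0; 0,-1] : Matrix (Fin 2) (Fin 2) ℂ)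
          + ζ^3 • (!![0, 4*y t; 8, 0] : Matrix (Fin 2) (Fin 2) ℂ)
          + ζ^2 • (!![-4*y t, 2*z t; 0, 4*y t] : Matrix (Fin 2) (Fin 2) ℂ)
          + ζ • (!![-2*z t, 2*(y t)^2 + t; -8*y t, 2*z t] : Matrix (Fin 2) (Fin 2) ℂ)
          + !![0, 1/2; 0, 0]).mulVec (Z ζ t)) ∧
    (∀ ζ t : ℂ,
      (fun i => deriv (fun s => Z ζ s i) t) =
        (ζ • (!![1,0; 0,-1] : Matrix (Fin 2) (Fin 2) ℂ)
          + !![0, y t; 2, 0]).mulVec (Z ζ t)) ∧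
    (∀ ζ t : ℂ,
      Z (-ζ) t = (!![1, -ζ; 0, 1] : Matrix (Fin 2) (Fin 2) ℂ).mulVec (Z ζ t)) := by
  have hYlam' (l t : ℂ) :
      HasDerivAt (fun w => Y w t) (jmLambdaMatrix (y t) (z t) t l *ᵥ Y l t) l :=
    hasDerivAt_of_deriv_apply_eq (fun i => ((hYdiff i).comp
      (differentiable_id.prodMk (differentiable_const t))).differentiableAt) (hYlam l t)
  have hYt' (l t : ℂ) : HasDerivAt (Y l) (jmTimeMatrix (y t) l *ᵥ Y l t) t :=
    hasDerivAt_of_deriv_apply_eq (fun i => ((hYdiff i).comp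
      ((differentiable_const l).prodMk differentiable_id)).differentiableAt) (hYt l t)
  obtain rfl : Z = fun ζ t => fabriGauge ζ *ᵥ Y (ζ^2) t := funext₂ hZ
  refine ⟨fun ζ t => ?_, fun ζ t => ?_, fun ζ t => ?_⟩
  · have hYsq : HasDerivAt (fun w => Y (w^2) t)
        (((2 * ζ) • jmLambdaMatrix (y t) (z t) t (ζ^2)) *ᵥ Y (ζ^2) t) ζ := by
      have h := (hYlam' (ζ^2) t).scomp ζ (hasDerivAt_pow 2 ζ)
      rw [show ((2 : ℕ) : ℂ) * ζ ^ (2 - 1) = 2 * ζ by norm_num, ← smul_mulVec] at h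
      exact h
    exact (HasDerivAt.gauge_mulVec (hasDerivAt_fabriGauge_apply ζ) hYsq
      (fabriZetaMatrix_mul_fabriGauge _ _ t ζ)).deriv_apply_eq
  · exact (HasDerivAt.gauge_mulVec (fun _ _ => hasDerivAt_const _ _) (hYt' (ζ^2) t)
      ((fabriTimeMatrix_mul_fabriGauge _ ζ).trans (zero_add _).symm)).deriv_apply_eq
  · simp only [even_two, Even.neg_pow, fabriGauge_neg, mulVec_mulVec]

/-- If `Y` is a holomorphic solution of the Jimbo–Miwa pair `JM₁`, then
`Z(ζ,t) := [[1,ζ/2],[0,1]]·Y(ζ²,t)` solves the Fabri-transformed pair `JM₁/F`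
and satisfies the reflection identity `Z(−ζ,t) = [[1,−ζ],[0,1]]·Z(ζ,t)`. -/
theorem stmt_3 (y z : ℂ → ℂ) (hy : Differentiable ℂ y) (hz : Differentiable ℂ z)
    (Y : ℂ → ℂ → Fin 2 → ℂ)
    (hYdiff : ∀ i, Differentiable ℂ (fun p : ℂ × ℂ => Y p.1 p.2 i))
    (hYlam : ∀ l t : ℂ,
      (fun i => deriv (fun w => Y w t i) l) =
        (l^2 • (!![0,1; 0,0] : Matrix (Fin 2) (Fin 2) ℂ) + l • !![0, y t; 4, 0] +
          !![-z t, (y t)^2 + t/2; -4*y t, z t]).mulVec (Y l t))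
    (hYt : ∀ l t : ℂ,
      (fun i => deriv (fun s => Y l s i) t) =
        ((l/2) • (!![0,1; 0,0] : Matrix (Fin 2) (Fin 2) ℂ) +
          !![0, y t; 2, 0]).mulVec (Y l t))
    (Z : ℂ → ℂ → Fin 2 → ℂ)
    (hZ : ∀ ζ t : ℂ,
      Z ζ t = (!![1, ζ/2; 0, 1] : Matrix (Fin 2) (Fin 2) ℂ).mulVec (Y (ζ^2) t)) :
    (∀ ζ t : ℂ,
      (fun i => deriv (fun w => Z w t i) ζ) =
        ((4*ζ^4) • (!![1,0; 0,-1] : Matrix (Fin 2) (Fin 2) ℂ)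
          + ζ^3 • (!![0, 4*y t; 8, 0] : Matrix (Fin 2) (Fin 2) ℂ)
          + ζ^2 • (!![-4*y t, 2*z t; 0, 4*y t] : Matrix (Fin 2) (Fin 2) ℂ)
          + ζ • (!![-2*z t, 2*(y t)^2 + t; -8*y t, 2*z t] : Matrix (Fin 2) (Fin 2) ℂ)
          + !![0, 1/2; 0, 0]).mulVec (Z ζ t)) ∧
    (∀ ζ t : ℂ,
      (fun i => deriv (fun s => Z ζ s i) t) =
        (ζ • (!![1,0; 0,-1] : Matrix (Fin 2) (Fin 2) ℂ)
          + !![0, y t; 2, 0]).mulVec (Z ζ t)) ∧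
    (∀ ζ t : ℂ,
      Z (-ζ) t = (!![1, -ζ; 0, 1] : Matrix (Fin 2) (Fin 2) ℂ).mulVec (Z ζ t)) :=
  stmt_3_general y z Y hYdiff hYlam hYt Z hZ
end
end

section
/- Let κ₁ ∈ ℂ, set κ₂ = −1, let θ := 1 + κ₁, and let u, y, z : ℂ → ℂ be holomorphic with u(t) ≠ 0 and u′(t) = −y(t)u(t) for all t. Let Φ = (Φ₁,Φ₂,Φ₃) : ℂ² → ℂ³ be a holomorphic solution of the JKT₂ pair with κ₂ = −1: [[−1, λ+y, 0],[0, −1/2, λ],[0, 0, −1]]·∂Φ/∂λ = [[z+2y²+t, −1−κ₁, 0],[−y, −z/2, 0],[1, 0, 0]]·Φ and ∂Φ/∂t = [[−λ, z/2, 0],[−1, y, 0],[0, −1/2, −y]]·Φ. Then Y(λ,t) := exp(λ³/3 + λt/2)·(−u(t)·Φ₂(λ,t), 2·Φ₁(λ,t))ᵀ satisfies the Jimbo–Miwa pair JM₂ with parameter θ = 1 + κ₁: ∂Y/∂λ = (λ²·[[1,0],[0,−1]] + λ·[[0,u],[−2z/u,0]] + [[z+t/2, −uy],[−2(yz+θ)/u,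 −z−t/2]])·Y and ∂Y/∂t = ((λ/2)·[[1,0],[0,−1]] + (1/2)·[[0,u],[−2z/u,0]])·Y. -/
open Matrix Complex

/-! The scalar factor `exp(λ³/3 + λt/2)` only shifts each coefficient matrix by a multiple of
the identity, so it suffices that `v = (−u·Φ₂, 2·Φ₁)ᵀ` solves the shifted system. The `λ`-equation
of `JKT₂` is triangular and gives `∂_λΦ₁, ∂_λΦ₂` explicitly in terms of `Φ₁, Φ₂`; the `t`-equation
does so directly, and `u' = −yu` accounts for the `t`-dependence of the prefactor `−u`. Comparing
entries is then polynomial algebra in which `θ = 1 + κ₁` is the only relation needed. -/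

theorem deriv_cexp_smul_eq_mulVec {n : Type*} [Fintype n] [DecidableEq n]
    {g : ℂ → ℂ} {v Y : ℂ → n → ℂ} {v' : n → ℂ} {x g' : ℂ} {M : Matrix n n ℂ}
    (hg : HasDerivAt g g' x) (hv : ∀ i, HasDerivAt (fun w => v w i) (v' i) x)
    (hv' : v' = (M - g' • 1) *ᵥ v x) (hY : ∀ w, Y w = exp (g w) • v w) :
    (fun i => deriv (fun w => Y w i) x) = M *ᵥ Y x := by
  funext i
  simp only [hY, Pi.smul_apply, smul_eq_mul]
  have hYi : HasDerivAt (fun w => exp (g w) * v w i)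
      (exp (g x) * g' * v x i + exp (g x) * v' i) x :=
    hg.cexp.mul (hv i)
  rw [hYi.deriv, hv', mulVec_smul]
  simp only [sub_mulVec, smul_mulVec, one_mulVec, Pi.sub_apply, Pi.smul_apply, smul_eq_mul]
  ring

theorem jkt₂_lambda_solve {κ₁ l y z t : ℂ} {d φ : Fin 3 → ℂ}
    (h : !![-1, l + y, 0; 0, -1/2, l; 0, 0, -1] *ᵥ d =
      !![z + 2*y^2 + t, -1-κ₁, 0; -y, -z/2, 0; 1, 0, 0] *ᵥ φ) :
    d 1 = (2*y - 2*l) * φ 0 + z * φ 1 ∧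
      d 0 = (-2*l^2 - z - t) * φ 0 + (l*z + y*z + 1 + κ₁) * φ 1 := by
  simp only [cons_mulVec, empty_mulVec, vec3_dotProduct, cons_val_zero, cons_val_one,
    cons_val_two, tail_cons, head_cons, vecCons_inj, and_true] at h
  obtain ⟨h0, h1, h2⟩ := h
  have hd1 : d 1 = (2*y - 2*l) * φ 0 + z * φ 1 := by linear_combination -2 * h1 - 2*l*h2
  exact ⟨hd1, by linear_combination -h0 + (l + y) * hd1⟩

theorem jm₂_lambda_of_jkt₂_lambda {κ₁ θ u y z t l : ℂ} {φ : ℂ → Fin 3 → ℂ}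
    {Y : ℂ → Fin 2 → ℂ} (hθ : θ = 1 + κ₁) (hu : u ≠ 0)
    (hφ : ∀ i, DifferentiableAt ℂ (fun w => φ w i) l)
    (hlam : !![-1, l + y, 0; 0, -1/2, l; 0, 0, -1] *ᵥ (fun i => deriv (fun w => φ w i) l) =
      !![z + 2*y^2 + t, -1-κ₁, 0; -y, -z/2, 0; 1, 0, 0] *ᵥ φ l)
    (hY : ∀ w, Y w = exp (w^3/3 + w*t/2) • ![-u * φ w 1, 2 * φ w 0]) :
    (fun i => deriv (fun w => Y w i) l) =
      (l^2 • !![1, 0; 0, -1] + l • !![0, u; -2*z/u, 0] +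
        !![z + t/2, -u*y; -2*(y*z + θ)/u, -z - t/2]) *ᵥ Y l := by
  obtain ⟨hd1, hd0⟩ := jkt₂_lambda_solve hlam
  have hphase : HasDerivAt (fun w : ℂ => w^3/3 + w*t/2) (l^2 + t/2) l := by
    refine (((hasDerivAt_pow 3 l).div_const 3).add
      (((hasDerivAt_id l).mul_const t).div_const 2)).congr_deriv ?_
    push_cast
    ring
  refine deriv_cexp_smul_eq_mulVec hphase (v' := ![-u * deriv (fun w => φ w 1) l,
    2 * deriv (fun w => φ w 0) l]) ?_ ?_ hY
  · rw [Fin.forall_fin_two]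
    exact ⟨(hφ 1).hasDerivAt.const_mul _, (hφ 0).hasDerivAt.const_mul _⟩
  · simp only [one_fin_two, smul_of, of_add_of, of_sub_of, smul_cons, smul_empty, cons_add_cons,
      cons_sub_cons, empty_add_empty, empty_sub_empty, cons_mulVec, vec2_dotProduct', empty_mulVec,
      vecCons_inj, smul_eq_mul, and_true]
    refine ⟨by rw [hd1]; ring, ?_⟩
    rw [hd0, hθ]
    field_simp
    ring

theorem jm₂_time_of_jkt₂_time {y z l t : ℂ} {u : ℂ → ℂ} {φ : ℂ → Fin 3 → ℂ}
    {Y : ℂ → Fin 2 → ℂ} (hu : HasDerivAt u (-y * u t) t) (hu0 : u t ≠ 0)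
    (hφ : ∀ i, DifferentiableAt ℂ (fun s => φ s i) t)
    (ht : (fun i => deriv (fun s => φ s i) t) = !![-l, z/2, 0; -1, y, 0; 0, -1/2, -y] *ᵥ φ t)
    (hY : ∀ s, Y s = exp (l^3/3 + l*s/2) • ![-(u s) * φ s 1, 2 * φ s 0]) :
    (fun i => deriv (fun s => Y s i) t) =
      ((l/2) • !![1, 0; 0, -1] + (1/2 : ℂ) • !![0, u t; -2*z/u t, 0]) *ᵥ Y t := by
  have he0 := congrFun ht 0
  have he1 := congrFun ht 1
  simp only [cons_mulVec, vec3_dotProduct, cons_val_zero, cons_val_one, cons_val_two, tail_cons,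
    head_cons] at he0 he1
  have hphase : HasDerivAt (fun s : ℂ => l^3/3 + l*s/2) (l/2) t := by
    simpa using ((hasDerivAt_id t).const_mul l).div_const 2 |>.const_add (l^3/3)
  refine deriv_cexp_smul_eq_mulVec hphase (v' := ![-(-y * u t) * φ t 1 + -(u t) *
    deriv (fun s => φ s 1) t, 2 * deriv (fun s => φ s 0) t]) ?_ ?_ hY
  · rw [Fin.forall_fin_two]
    exact ⟨hu.neg.mul (hφ 1).hasDerivAt, (hφ 0).hasDerivAt.const_mul _⟩
  · simp only [one_fin_two, smul_of, of_add_of, of_sub_of, smul_cons, smul_empty, cons_add_cons,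
      cons_sub_cons, empty_add_empty, empty_sub_empty, cons_mulVec, vec2_dotProduct', empty_mulVec,
      vecCons_inj, smul_eq_mul, and_true]
    refine ⟨by rw [he1]; ring, ?_⟩
    rw [he0]
    field_simp
    ring

theorem stmt_11_general (κ₁ θ : ℂ) (hθ : θ = 1 + κ₁)
    (u y z : ℂ → ℂ)
    (hu : Differentiable ℂ u)
    (hu0 : ∀ t : ℂ, u t ≠ 0) (hu' : ∀ t : ℂ, deriv u t = -(y t) * u t)
    (Φ : ℂ → ℂ → Fin 3 → ℂ)
    (hΦ : ∀ i, Differentiable ℂ (fun p : ℂ × ℂ => Φ p.1 p.2 i))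
    (hlam : ∀ l t : ℂ,
      (!![-1, l + y t, 0; 0, -1/2, l; 0, 0, -1] : Matrix (Fin 3) (Fin 3) ℂ).mulVec
          (fun i => deriv (fun w => Φ w t i) l) =
        (!![z t + 2*(y t)^2 + t, -1-κ₁, 0; -y t, -(z t)/2, 0; 1, 0, 0] :
          Matrix (Fin 3) (Fin 3) ℂ).mulVec (Φ l t))
    (ht : ∀ l t : ℂ,
      (fun i => deriv (fun s => Φ l s i) t) =
        (!![-l, (z t)/2, 0; -1, y t, 0; 0, -1/2, -y t] :
          Matrix (Fin 3) (Fin 3) ℂ).mulVec (Φ l t))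
    (Y : ℂ → ℂ → Fin 2 → ℂ)
    (hY : ∀ l t : ℂ,
      Y l t = Complex.exp (l^3/3 + l*t/2) • ![-(u t) * Φ l t 1, 2 * Φ l t 0]) :
    (∀ l t : ℂ,
      (fun i => deriv (fun w => Y w t i) l) =
        (l^2 • (!![1,0; 0,-1] : Matrix (Fin 2) (Fin 2) ℂ) +
          l • !![0, u t; -2*z t/u t, 0] +
          !![z t + t/2, -(u t)*(y t);
            -2*(y t*z t + θ)/u t, -(z t) - t/2]).mulVec (Y l t)) ∧
    (∀ l t : ℂ,
      (fun i => deriv (fun s => Y l s i) t) =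
        ((l/2) • (!![1,0; 0,-1] : Matrix (Fin 2) (Fin 2) ℂ) +
          (1/2 : ℂ) • !![0, u t; -2*z t/u t, 0]).mulVec (Y l t)) := by
  have hΦl (t : ℂ) (i : Fin 3) : Differentiable ℂ (fun w => Φ w t i) :=
    (hΦ i).comp (differentiable_id.prodMk (differentiable_const t))
  have hΦt (l : ℂ) (i : Fin 3) : Differentiable ℂ (fun s => Φ l s i) :=
    (hΦ i).comp ((differentiable_const l).prodMk differentiable_id)
  exact ⟨fun l t => jm₂_lambda_of_jkt₂_lambda hθ (hu0 t) (fun i => hΦl t i l) (hlam l t)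
      (fun w => hY w t),
    fun l t => jm₂_time_of_jkt₂_time (hu' t ▸ (hu t).hasDerivAt) (hu0 t) (fun i => hΦt l i t)
      (ht l t) (hY l)⟩

/-- If `Φ` is a holomorphic solution of the `JKT₂` pair with `κ₂ = −1`, and
`u' = −yu` with `u` nowhere zero, then
`Y := exp(λ³/3 + λt/2)·(−u·Φ₂, 2·Φ₁)ᵀ` solves the Jimbo–Miwa pair `JM₂`
with parameter `θ = 1 + κ₁`. -/
theorem stmt_11 (κ₁ θ : ℂ) (hθ : θ = 1 + κ₁)
    (u y z : ℂ → ℂ)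
    (hu : Differentiable ℂ u) (hy : Differentiable ℂ y) (hz : Differentiable ℂ z)
    (hu0 : ∀ t : ℂ, u t ≠ 0) (hu' : ∀ t : ℂ, deriv u t = -(y t) * u t)
    (Φ : ℂ → ℂ → Fin 3 → ℂ)
    (hΦ : ∀ i, Differentiable ℂ (fun p : ℂ × ℂ => Φ p.1 p.2 i))
    (hlam : ∀ l t : ℂ,
      (!![-1, l + y t, 0; 0, -1/2, l; 0, 0, -1] : Matrix (Fin 3) (Fin 3) ℂ).mulVec
          (fun i => deriv (fun w => Φ w t i) l) =
        (!![z t + 2*(y t)^2 + t, -1-κ₁, 0; -y t, -(z t)/2, 0; 1, 0, 0] :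
          Matrix (Fin 3) (Fin 3) ℂ).mulVec (Φ l t))
    (ht : ∀ l t : ℂ,
      (fun i => deriv (fun s => Φ l s i) t) =
        (!![-l, (z t)/2, 0; -1, y t, 0; 0, -1/2, -y t] :
          Matrix (Fin 3) (Fin 3) ℂ).mulVec (Φ l t))
    (Y : ℂ → ℂ → Fin 2 → ℂ)
    (hY : ∀ l t : ℂ,
      Y l t = Complex.exp (l^3/3 + l*t/2) • ![-(u t) * Φ l t 1, 2 * Φ l t 0]) :
    (∀ l t : ℂ,
      (fun i => deriv (fun w => Y w t i) l) =
        (l^2 • (!![1,0; 0,-1] : Matrix (Fin 2) (Fin 2) ℂ) +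
          l • !![0, u t; -2*z t/u t, 0] +
          !![z t + t/2, -(u t)*(y t);
            -2*(y t*z t + θ)/u t, -(z t) - t/2]).mulVec (Y l t)) ∧
    (∀ l t : ℂ,
      (fun i => deriv (fun s => Y l s i) t) =
        ((l/2) • (!![1,0; 0,-1] : Matrix (Fin 2) (Fin 2) ℂ) +
          (1/2 : ℂ) • !![0, u t; -2*z t/u t, 0]).mulVec (Y l t)) :=
  stmt_11_general κ₁ θ hθ u y z hu hu0 hu' Φ hΦ hlam ht Y hY
end

section
/- Let κ₁, κ₂ ∈ ℂ and let y, z : ℂ → ℂ be holomorphic. Let Ψ = (Ψ₁,Ψ₂,Ψ₃) : (ℂ∖{0})×ℂ → ℂ³ be holomorphic and satisfy [[0,1,0],[0,0,1],[0,0,0]]·μ·∂Ψ/∂μ = [[μ−(z+2y²+t), −μy+κ₁, 0],[y, (μ+z)/2, κ₂],[−1, 0, μ]]·Ψ and ∂Ψ/∂t = [[0,0,−1],[0,0,0],[0,0,0]]·μ·∂Ψ/∂μ + [[0, z/2, κ₂],[−1, y, 0],[0, −1/2, −y]]·Ψ. Then Ψ₁(μ,t) = μ·Ψ₃(μ,t)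 for all (μ,t), and ψ := (Ψ₂, Ψ₃)ᵀ satisfies ∂ψ/∂μ = (μ·[[0,1],[0,0]] + [[−y, −(z+2y²+t)],[1/2, y]] + (1/μ)·[[κ₁, 0],[z/2, κ₂]])·ψ and ∂ψ/∂t = −(μ·[[0,1],[0,0]] + [[−y, 0],[1/2, y]])·ψ. -/
/-!
The last row of the matrix `[[0,1,0],[0,0,1],[0,0,0]]` vanishes, so the last row of the
`μ`-equation is not differential at all: it is the constraint `Ψ₁ = μΨ₃` (`Ψ 0 = μ * Ψ 2` with
`Fin 3` indexing). Substituting it into the two middle rows of the `μ`-equation (divided by `μ`)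
and into the last two rows of the `t`-equation gives the `2×2` system for `ψ = (Ψ₂, Ψ₃)`.
-/

open Matrix

section Reduction

variable {K : Type*} [Field K] {κ₁ κ₂ y z t μ : K} {D P E : Fin 3 → K}

theorem dJKT_spectral_zero_eq_mul_two
    (h : !![0,1,0; 0,0,1; 0,0,0] *ᵥ D =
      !![μ - (z + 2*y^2 + t), -μ*y + κ₁, 0; y, (μ + z)/2, κ₂; -1, 0, μ] *ᵥ P) :
    P 0 = μ * P 2 := by
  have h₂ : 0 = -P 0 + μ * P 2 := by
    simpa [mulVec, dotProduct, Fin.sum_univ_three] using congrFun h 2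
  linear_combination h₂

theorem dJKT_spectral_reduce (hμ : μ ≠ 0)
    (h : !![0,1,0; 0,0,1; 0,0,0] *ᵥ (fun i => μ * D i) =
      !![μ - (z + 2*y^2 + t), -μ*y + κ₁, 0; y, (μ + z)/2, κ₂; -1, 0, μ] *ᵥ P) :
    ![D 1, D 2] =
      (μ • !![0,1; 0,0] + !![-y, -(z + 2*y^2 + t); 1/2, y] + (1/μ) • !![κ₁, 0; z/2, κ₂]) *ᵥ
        ![P 1, P 2] := by
  have hP := dJKT_spectral_zero_eq_mul_two h
  have h₀ : μ * D 1 = (μ - (z + 2*y^2 + t)) * P 0 + (-μ*y + κ₁) * P 1 := by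
    simpa [mulVec, dotProduct, Fin.sum_univ_three] using congrFun h 0
  have h₁ : μ * D 2 = y * P 0 + (μ + z)/2 * P 1 + κ₂ * P 2 := by
    simpa [mulVec, dotProduct, Fin.sum_univ_three] using congrFun h 1
  have hμμ : μ * μ⁻¹ = 1 := mul_inv_cancel₀ hμ
  rw [mulVec_fin_two]
  refine vec2_eq ?_ ?_ <;> rw [← mul_right_inj' hμ] <;>
    simp only [Matrix.add_apply, Matrix.smul_apply, of_apply, cons_val', cons_val_zero,
      cons_val_one, cons_val_fin_one, smul_eq_mul]
  · linear_combination h₀ + (μ - (z + 2*y^2 + t)) * hP - κ₁ * P 1 * hμμ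
  · linear_combination h₁ + y * hP - (z/2 * P 1 + κ₂ * P 2) * hμμ

theorem dJKT_deformation_reduce (hP : P 0 = μ * P 2)
    (h : E = !![0,0,-1; 0,0,0; 0,0,0] *ᵥ (fun i => μ * D i) +
      !![0, z/2, κ₂; -1, y, 0; 0, -1/2, -y] *ᵥ P) :
    ![E 1, E 2] = (-(μ • !![0,1; 0,0] + !![-y, 0; 1/2, y])) *ᵥ ![P 1, P 2] := by
  have h₁ : E 1 = -P 0 + y * P 1 := by
    simpa [mulVec, dotProduct, Fin.sum_univ_three] using congrFun h 1
  have h₂ : E 2 = -1/2 * P 1 - y * P 2 := by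
    simpa [mulVec, dotProduct, Fin.sum_univ_three, sub_eq_add_neg] using congrFun h 2
  rw [mulVec_fin_two]
  refine vec2_eq ?_ ?_ <;>
    simp only [Matrix.neg_apply, Matrix.add_apply, Matrix.smul_apply, of_apply, cons_val',
      cons_val_zero, cons_val_one, cons_val_fin_one, smul_eq_mul]
  · linear_combination h₁ - hP
  · linear_combination h₂

end Reduction

theorem deriv_apply_vec2 {𝕜 F : Type*} [NontriviallyNormedField 𝕜] [NormedAddCommGroup F]
    [NormedSpace 𝕜 F] (f g : 𝕜 → F) (a : 𝕜) :
    (fun i => deriv (fun x => ![f x, g x] i) a) = ![deriv f a, deriv g a] := by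
  ext i
  fin_cases i <;> rfl

theorem stmt_12_general (κ₁ κ₂ : ℂ) (y z : ℂ → ℂ)
    (Ψ : ℂ → ℂ → Fin 3 → ℂ)
    (hμeq : ∀ μ : ℂ, μ ≠ 0 → ∀ t : ℂ,
      (!![0,1,0; 0,0,1; 0,0,0] : Matrix (Fin 3) (Fin 3) ℂ).mulVec
          (fun i => μ * deriv (fun m => Ψ m t i) μ) =
        (!![μ - (z t + 2*(y t)^2 + t), -μ*(y t) + κ₁, 0;
            y t, (μ + z t)/2, κ₂;
            -1, 0, μ] : Matrix (Fin 3) (Fin 3) ℂ).mulVec (Ψ μ t))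
    (hteq : ∀ μ : ℂ, μ ≠ 0 → ∀ t : ℂ,
      (fun i => deriv (fun s => Ψ μ s i) t) =
        (!![0,0,-1; 0,0,0; 0,0,0] : Matrix (Fin 3) (Fin 3) ℂ).mulVec
            (fun i => μ * deriv (fun m => Ψ m t i) μ) +
          (!![0, (z t)/2, κ₂; -1, y t, 0; 0, -1/2, -y t] :
            Matrix (Fin 3) (Fin 3) ℂ).mulVec (Ψ μ t)) :
    (∀ μ : ℂ, μ ≠ 0 → ∀ t : ℂ, Ψ μ t 0 = μ * Ψ μ t 2) ∧
    (∀ ψ : ℂ → ℂ → Fin 2 → ℂ,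
      (∀ μ t : ℂ, ψ μ t = ![Ψ μ t 1, Ψ μ t 2]) →
      (∀ μ : ℂ, μ ≠ 0 → ∀ t : ℂ,
        (fun i => deriv (fun m => ψ m t i) μ) =
          (μ • (!![0,1; 0,0] : Matrix (Fin 2) (Fin 2) ℂ) +
            !![-y t, -(z t + 2*(y t)^2 + t); 1/2, y t] +
            (1/μ) • !![κ₁, 0; (z t)/2, κ₂]).mulVec (ψ μ t)) ∧
      (∀ μ : ℂ, μ ≠ 0 → ∀ t : ℂ,
        (fun i => deriv (fun s => ψ μ s i) t) =
          (-(μ • (!![0,1; 0,0] : Matrix (Fin 2) (Fin 2) ℂ) +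
            !![-y t, 0; 1/2, y t])).mulVec (ψ μ t))) := by
  have hΨ₀ (μ : ℂ) (hμ : μ ≠ 0) (t : ℂ) : Ψ μ t 0 = μ * Ψ μ t 2 :=
    dJKT_spectral_zero_eq_mul_two (hμeq μ hμ t)
  refine ⟨hΨ₀, fun ψ hψ => ?_⟩
  obtain rfl : ψ = fun μ t => ![Ψ μ t 1, Ψ μ t 2] := funext₂ hψ
  refine ⟨fun μ hμ t => ?_, fun μ hμ t => ?_⟩
  · rw [deriv_apply_vec2]
    exact dJKT_spectral_reduce hμ (hμeq μ hμ t)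
  · rw [deriv_apply_vec2]
    exact dJKT_deformation_reduce (hΨ₀ μ hμ t) (hteq μ hμ t)

/-- If `Ψ` is a holomorphic solution of the degenerate pair `dJKT₂³` on
`(ℂ∖{0})×ℂ`, then `Ψ₁ = μΨ₃`, and `ψ := (Ψ₂,Ψ₃)ᵀ` solves the corresponding
`2×2` system (gauge equivalent to the Harnad–Tracy–Widom pair). -/
theorem stmt_12 (κ₁ κ₂ : ℂ) (y z : ℂ → ℂ)
    (hy : Differentiable ℂ y) (hz : Differentiable ℂ z)
    (Ψ : ℂ → ℂ → Fin 3 → ℂ)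
    (hΨ : ∀ i, DifferentiableOn ℂ (fun p : ℂ × ℂ => Ψ p.1 p.2 i) {p | p.1 ≠ 0})
    (hμeq : ∀ μ : ℂ, μ ≠ 0 → ∀ t : ℂ,
      (!![0,1,0; 0,0,1; 0,0,0] : Matrix (Fin 3) (Fin 3) ℂ).mulVec
          (fun i => μ * deriv (fun m => Ψ m t i) μ) =
        (!![μ - (z t + 2*(y t)^2 + t), -μ*(y t) + κ₁, 0;
            y t, (μ + z t)/2, κ₂;
            -1, 0, μ] : Matrix (Fin 3) (Fin 3) ℂ).mulVec (Ψ μ t))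
    (hteq : ∀ μ : ℂ, μ ≠ 0 → ∀ t : ℂ,
      (fun i => deriv (fun s => Ψ μ s i) t) =
        (!![0,0,-1; 0,0,0; 0,0,0] : Matrix (Fin 3) (Fin 3) ℂ).mulVec
            (fun i => μ * deriv (fun m => Ψ m t i) μ) +
          (!![0, (z t)/2, κ₂; -1, y t, 0; 0, -1/2, -y t] :
            Matrix (Fin 3) (Fin 3) ℂ).mulVec (Ψ μ t)) :
    (∀ μ : ℂ, μ ≠ 0 → ∀ t : ℂ, Ψ μ t 0 = μ * Ψ μ t 2) ∧
    (∀ ψ : ℂ → ℂ → Fin 2 → ℂ,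
      (∀ μ t : ℂ, ψ μ t = ![Ψ μ t 1, Ψ μ t 2]) →
      (∀ μ : ℂ, μ ≠ 0 → ∀ t : ℂ,
        (fun i => deriv (fun m => ψ m t i) μ) =
          (μ • (!![0,1; 0,0] : Matrix (Fin 2) (Fin 2) ℂ) +
            !![-y t, -(z t + 2*(y t)^2 + t); 1/2, y t] +
            (1/μ) • !![κ₁, 0; (z t)/2, κ₂]).mulVec (ψ μ t)) ∧
      (∀ μ : ℂ, μ ≠ 0 → ∀ t : ℂ,
        (fun i => deriv (fun s => ψ μ s i) t) =
          (-(μ • (!![0,1; 0,0] : Matrix (Fin 2) (Fin 2) ℂ) +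
            !![-y t, 0; 1/2, y t])).mulVec (ψ μ t))) :=
  stmt_12_general κ₁ κ₂ y z Ψ hμeq hteq
end

section
/- Let θ ∈ ℂ and let y, z : ℂ → ℂ be holomorphic. Let Φ = (Φ₁,Φ₂,Φ₃) : ℂ² → ℂ³ be holomorphic and satisfy the degenerate system [[1,0,0],[0,1,0],[0,0,0]]·∂Φ/∂λ = [[−(z+t), λz+yz+θ, 2λ],[2y, z, 2],[λ, 0, 1]]·Φ and ∂Φ/∂t = (1/2)·[[0, z, 2],[−2, 2y, 0],[0, −λz, −2λ]]·Φ. Then Φ₃(λ,t) = −λ·Φ₁(λ,t) for all (λ,t), and φ := (Φ₁, Φ₂)ᵀ satisfies ∂φ/∂λ = −(λ²·[[2,0],[0,0]] + λ·[[0,−z],[2,0]] + [[z+t, −yz−θ],[−2y, −z]])·φ and ∂φ/∂t = −(1/2)·(λ·[[2,0],[0,0]] + [[0,−z],[2,−2y]])·φ. Moreover, if u : ℂ → ℂ is holomorphic with u ≠ 0 and u′ = −yu, then Y := exp(λ³/3 + λt/2)·(−u·Φ₂, 2·Φ₁)ᵀ satisfies the Jimbo–Miwa pair JM₂ with parameter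 θ. -/
/-!
The third row of the `λ`-equation contains no derivative: it is the algebraic constraint
`Φ₃ = -λΦ₁`. Substituting it into the other rows of both equations eliminates `Φ₃` and leaves
the `2×2` system for `φ = (Φ₁, Φ₂)`. The vector `Y` is obtained from `φ` by the `t`-dependent
change of basis `(Φ₁, Φ₂) ↦ (-uΦ₂, 2Φ₁)` and the scalar gauge factor `exp(λ³/3 + λt/2)`: the
logarithmic derivatives `λ² + t/2` and `λ/2` of the gauge factor produce the diagonal parts
of `JM₂`, and `u' = -yu` absorbs the `t`-derivative of the change of basis.
-/

open Matrix Complex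

noncomputable section

theorem deriv_cexp_smul {ι : Type*} {g : ℂ → ℂ} {g' x : ℂ} {ψ : ℂ → ι → ℂ} {ψ' : ι → ℂ}
    (hg : HasDerivAt g g' x) (hψ : ∀ i, HasDerivAt (fun w => ψ w i) (ψ' i) x) :
    (fun i => deriv (fun w => (exp (g w) • ψ w) i) x) = exp (g x) • (g' • ψ x + ψ') := by
  funext i
  have hprod : HasDerivAt (fun w => exp (g w) * ψ w i) _ x := hg.cexp.mul (hψ i)
  simp only [Pi.smul_apply, smul_eq_mul, Pi.add_apply, hprod.deriv]
  ring

theorem hasDerivAt_partial_fst {𝕜 F : Type*} [NontriviallyNormedField 𝕜] [NormedAddCommGroup F]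
    [NormedSpace 𝕜 F] {f : 𝕜 × 𝕜 → F} (hf : Differentiable 𝕜 f) (l t : 𝕜) :
    HasDerivAt (fun w => f (w, t)) (deriv (fun w => f (w, t)) l) l :=
  ((hf.comp (differentiable_id.prodMk (differentiable_const t))) l).hasDerivAt

theorem hasDerivAt_partial_snd {𝕜 F : Type*} [NontriviallyNormedField 𝕜] [NormedAddCommGroup F]
    [NormedSpace 𝕜 F] {f : 𝕜 × 𝕜 → F} (hf : Differentiable 𝕜 f) (l t : 𝕜) :
    HasDerivAt (fun s => f (l, s)) (deriv (fun s => f (l, s)) t) t :=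
  ((hf.comp ((differentiable_const l).prodMk differentiable_id)) t).hasDerivAt

theorem hasDerivAt_pow_three_div_three_add_mul_div_two (l t : ℂ) :
    HasDerivAt (fun w : ℂ => w^3/3 + w*t/2) (l^2 + t/2) l := by
  have := ((hasDerivAt_pow 3 l).div_const 3).add (((hasDerivAt_id l).mul_const t).div_const 2)
  exact this.congr_deriv (by push_cast; ring)

theorem hasDerivAt_const_add_mul_div_two (c l t : ℂ) :
    HasDerivAt (fun s : ℂ => c + l*s/2) (l/2) t := by
  have := (hasDerivAt_const t c).add (((hasDerivAt_id t).const_mul l).div_const 2)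
  exact this.congr_deriv (by ring)

/- The two equations of the degenerate pair `dJKT₂¹`; the components `Φ l t 0, 1, 2` are the
paper's `Φ₁, Φ₂, Φ₃`. -/
def SolvesDJKTLambda (θ : ℂ) (y z : ℂ → ℂ) (Φ : ℂ → ℂ → Fin 3 → ℂ) : Prop :=
  ∀ l t : ℂ,
    (!![1,0,0; 0,1,0; 0,0,0] : Matrix (Fin 3) (Fin 3) ℂ).mulVec
        (fun i => deriv (fun w => Φ w t i) l) =
      (!![-(z t + t), l*(z t) + (y t)*(z t) + θ, 2*l;
          2*y t, z t, 2;
          l, 0, 1] : Matrix (Fin 3) (Fin 3) ℂ).mulVec (Φ l t)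

def SolvesDJKTTime (y z : ℂ → ℂ) (Φ : ℂ → ℂ → Fin 3 → ℂ) : Prop :=
  ∀ l t : ℂ,
    (fun i => deriv (fun s => Φ l s i) t) =
      ((1/2 : ℂ) • (!![0, z t, 2; -2, 2*y t, 0; 0, -l*(z t), -2*l] :
        Matrix (Fin 3) (Fin 3) ℂ)).mulVec (Φ l t)

variable {θ : ℂ} {y z : ℂ → ℂ} {Φ : ℂ → ℂ → Fin 3 → ℂ}

namespace SolvesDJKTLambda

theorem apply_two_eq (h : SolvesDJKTLambda θ y z Φ) (l t : ℂ) : Φ l t 2 = -l * Φ l t 0 := by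
  have row : 0 = l * Φ l t 0 + Φ l t 2 := by
    simpa [mulVec, dotProduct, Fin.sum_univ_three] using congrFun (h l t) 2
  linear_combination -row

theorem deriv_apply_zero (h : SolvesDJKTLambda θ y z Φ) (l t : ℂ) :
    deriv (fun w => Φ w t 0) l =
      (-2*l^2 - (z t + t)) * Φ l t 0 + (l * z t + y t * z t + θ) * Φ l t 1 := by
  have row : deriv (fun w => Φ w t 0) l =
      -(z t + t) * Φ l t 0 + (l * z t + y t * z t + θ) * Φ l t 1 + 2 * l * Φ l t 2 := by
    simpa [mulVec, dotProduct, Fin.sum_univ_three] using congrFun (h l t) 0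
  linear_combination row + 2 * l * h.apply_two_eq l t

theorem deriv_apply_one (h : SolvesDJKTLambda θ y z Φ) (l t : ℂ) :
    deriv (fun w => Φ w t 1) l = (2 * y t - 2*l) * Φ l t 0 + z t * Φ l t 1 := by
  have row : deriv (fun w => Φ w t 1) l = 2 * y t * Φ l t 0 + z t * Φ l t 1 + 2 * Φ l t 2 := by
    simpa [mulVec, dotProduct, Fin.sum_univ_three] using congrFun (h l t) 1
  linear_combination row + 2 * h.apply_two_eq l t

theorem reduced_eq (h : SolvesDJKTLambda θ y z Φ) (l t : ℂ) :
    (fun i => deriv (fun w => ![Φ w t 0, Φ w t 1] i) l) =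
      (-(l^2 • (!![2,0; 0,0] : Matrix (Fin 2) (Fin 2) ℂ) +
          l • !![0, -z t; 2, 0] +
          !![z t + t, -(y t)*(z t) - θ; -2*y t, -z t])).mulVec ![Φ l t 0, Φ l t 1] := by
  ext i
  fin_cases i
  · simp only [mulVec, dotProduct, Fin.sum_univ_two, Matrix.add_apply, Matrix.neg_apply,
      Matrix.smul_apply, of_apply, cons_val_zero, cons_val_one, smul_eq_mul, Fin.zero_eta,
      Fin.isValue, h.deriv_apply_zero]
    ring
  · simp only [mulVec, dotProduct, Fin.sum_univ_two, Matrix.add_apply, Matrix.neg_apply,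
      Matrix.smul_apply, of_apply, cons_val_zero, cons_val_one, smul_eq_mul, Fin.mk_one,
      Fin.isValue, h.deriv_apply_one]
    ring

theorem jimboMiwa_eq (h : SolvesDJKTLambda θ y z Φ)
    (hΦ : ∀ i, Differentiable ℂ (fun p : ℂ × ℂ => Φ p.1 p.2 i)) {u : ℂ → ℂ} (hu : ∀ t, u t ≠ 0)
    (l t : ℂ) :
    (fun i => deriv (fun w =>
        (exp (w^3/3 + w*t/2) • ![-(u t) * Φ w t 1, 2 * Φ w t 0]) i) l) =
      (l^2 • (!![1,0; 0,-1] : Matrix (Fin 2) (Fin 2) ℂ) +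
          l • !![0, u t; -2*z t/u t, 0] +
          !![z t + t/2, -(u t)*(y t);
            -2*((y t)*(z t) + θ)/u t, -(z t) - t/2]).mulVec
        (exp (l^3/3 + l*t/2) • ![-(u t) * Φ l t 1, 2 * Φ l t 0]) := by
  rw [deriv_cexp_smul (hasDerivAt_pow_three_div_three_add_mul_div_two l t)
    (ψ' := ![-(u t) * deriv (fun w => Φ w t 1) l, 2 * deriv (fun w => Φ w t 0) l]), mulVec_smul]
  · congr 1
    ext i
    fin_cases i
    · simp only [mulVec, dotProduct, Fin.sum_univ_two, Matrix.add_apply, Matrix.smul_apply,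
        of_apply, cons_val_zero, cons_val_one, smul_eq_mul, Pi.add_apply, Pi.smul_apply,
        Fin.zero_eta, Fin.isValue, h.deriv_apply_one]
      ring
    · have hut := hu t
      simp only [mulVec, dotProduct, Fin.sum_univ_two, Matrix.add_apply, Matrix.smul_apply,
        of_apply, cons_val_zero, cons_val_one, smul_eq_mul, Pi.add_apply, Pi.smul_apply,
        Fin.mk_one, Fin.isValue, h.deriv_apply_zero]
      field_simp
      ring
  · intro i
    fin_cases i
    · exact (hasDerivAt_partial_fst (hΦ 1) l t).const_mul _
    · exact (hasDerivAt_partial_fst (hΦ 0) l t).const_mul _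

end SolvesDJKTLambda

namespace SolvesDJKTTime

theorem deriv_apply_zero (h : SolvesDJKTTime y z Φ) (hl : SolvesDJKTLambda θ y z Φ) (l t : ℂ) :
    deriv (fun s => Φ l s 0) t = -l * Φ l t 0 + (z t / 2) * Φ l t 1 := by
  have row : deriv (fun s => Φ l s 0) t = z t / 2 * Φ l t 1 + Φ l t 2 := by
    simpa [mulVec, dotProduct, Fin.sum_univ_three, div_eq_inv_mul] using congrFun (h l t) 0
  linear_combination row + hl.apply_two_eq l t

theorem deriv_apply_one (h : SolvesDJKTTime y z Φ) (l t : ℂ) :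
    deriv (fun s => Φ l s 1) t = -Φ l t 0 + y t * Φ l t 1 := by
  simpa [mulVec, dotProduct, Fin.sum_univ_three] using congrFun (h l t) 1

theorem reduced_eq (h : SolvesDJKTTime y z Φ) (hl : SolvesDJKTLambda θ y z Φ) (l t : ℂ) :
    (fun i => deriv (fun s => ![Φ l s 0, Φ l s 1] i) t) =
      ((-(1/2) : ℂ) • (l • (!![2,0; 0,0] : Matrix (Fin 2) (Fin 2) ℂ) +
        !![0, -z t; 2, -2*y t])).mulVec ![Φ l t 0, Φ l t 1] := by
  ext i
  fin_cases i
  · simp only [mulVec, dotProduct, Fin.sum_univ_two, Matrix.add_apply, Matrix.smul_apply,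
      of_apply, cons_val_zero, cons_val_one, smul_eq_mul, Fin.zero_eta, Fin.isValue,
      h.deriv_apply_zero hl]
    ring
  · simp only [mulVec, dotProduct, Fin.sum_univ_two, Matrix.add_apply, Matrix.smul_apply,
      of_apply, cons_val_zero, cons_val_one, smul_eq_mul, Fin.mk_one, Fin.isValue,
      h.deriv_apply_one]
    ring

theorem jimboMiwa_eq (h : SolvesDJKTTime y z Φ) (hl : SolvesDJKTLambda θ y z Φ)
    (hΦ : ∀ i, Differentiable ℂ (fun p : ℂ × ℂ => Φ p.1 p.2 i)) {u : ℂ → ℂ}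
    (hu : Differentiable ℂ u) (hu0 : ∀ t, u t ≠ 0) (hu' : ∀ t, deriv u t = -(y t) * u t)
    (l t : ℂ) :
    (fun i => deriv (fun s =>
        (exp (l^3/3 + l*s/2) • ![-(u s) * Φ l s 1, 2 * Φ l s 0]) i) t) =
      ((l/2) • (!![1,0; 0,-1] : Matrix (Fin 2) (Fin 2) ℂ) +
          (1/2 : ℂ) • !![0, u t; -2*z t/u t, 0]).mulVec
        (exp (l^3/3 + l*t/2) • ![-(u t) * Φ l t 1, 2 * Φ l t 0]) := by
  rw [deriv_cexp_smul (hasDerivAt_const_add_mul_div_two _ l t)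
    (ψ' := ![-(deriv u t) * Φ l t 1 + -(u t) * deriv (fun s => Φ l s 1) t,
      2 * deriv (fun s => Φ l s 0) t]), mulVec_smul]
  · congr 1
    ext i
    fin_cases i
    · simp only [mulVec, dotProduct, Fin.sum_univ_two, Matrix.add_apply, Matrix.smul_apply,
        of_apply, cons_val_zero, cons_val_one, smul_eq_mul, Pi.add_apply, Pi.smul_apply,
        Fin.zero_eta, Fin.isValue, h.deriv_apply_one, hu']
      ring
    · have hut := hu0 t
      simp only [mulVec, dotProduct, Fin.sum_univ_two, Matrix.add_apply, Matrix.smul_apply,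
        of_apply, cons_val_zero, cons_val_one, smul_eq_mul, Pi.add_apply, Pi.smul_apply,
        Fin.mk_one, Fin.isValue, h.deriv_apply_zero hl]
      field_simp
      ring
  · intro i
    fin_cases i
    · exact (hu t).hasDerivAt.neg.mul (hasDerivAt_partial_snd (hΦ 1) l t)
    · exact (hasDerivAt_partial_snd (hΦ 0) l t).const_mul _

end SolvesDJKTTime

theorem stmt_14_general (θ : ℂ) (y z : ℂ → ℂ)
    (Φ : ℂ → ℂ → Fin 3 → ℂ)
    (hΦ : ∀ i, Differentiable ℂ (fun p : ℂ × ℂ => Φ p.1 p.2 i))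
    (hlam : ∀ l t : ℂ,
      (!![1,0,0; 0,1,0; 0,0,0] : Matrix (Fin 3) (Fin 3) ℂ).mulVec
          (fun i => deriv (fun w => Φ w t i) l) =
        (!![-(z t + t), l*(z t) + (y t)*(z t) + θ, 2*l;
            2*y t, z t, 2;
            l, 0, 1] : Matrix (Fin 3) (Fin 3) ℂ).mulVec (Φ l t))
    (ht : ∀ l t : ℂ,
      (fun i => deriv (fun s => Φ l s i) t) =
        ((1/2 : ℂ) • (!![0, z t, 2; -2, 2*y t, 0; 0, -l*(z t), -2*l] :
          Matrix (Fin 3) (Fin 3) ℂ)).mulVec (Φ l t)) :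
    (∀ l t : ℂ, Φ l t 2 = -l * Φ l t 0) ∧
    (∀ φ : ℂ → ℂ → Fin 2 → ℂ,
      (∀ l t : ℂ, φ l t = ![Φ l t 0, Φ l t 1]) →
      (∀ l t : ℂ,
        (fun i => deriv (fun w => φ w t i) l) =
          (-(l^2 • (!![2,0; 0,0] : Matrix (Fin 2) (Fin 2) ℂ) +
              l • !![0, -z t; 2, 0] +
              !![z t + t, -(y t)*(z t) - θ; -2*y t, -z t])).mulVec (φ l t)) ∧
      (∀ l t : ℂ,
        (fun i => deriv (fun s => φ l s i) t) =
          ((-(1/2) : ℂ) • (l • (!![2,0; 0,0] : Matrix (Fin 2) (Fin 2) ℂ) +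
            !![0, -z t; 2, -2*y t])).mulVec (φ l t))) ∧
    (∀ u : ℂ → ℂ, Differentiable ℂ u → (∀ t : ℂ, u t ≠ 0) →
      (∀ t : ℂ, deriv u t = -(y t) * u t) →
      ∀ Y : ℂ → ℂ → Fin 2 → ℂ,
        (∀ l t : ℂ,
          Y l t = Complex.exp (l^3/3 + l*t/2) • ![-(u t) * Φ l t 1, 2 * Φ l t 0]) →
        (∀ l t : ℂ,
          (fun i => deriv (fun w => Y w t i) l) =
            (l^2 • (!![1,0; 0,-1] : Matrix (Fin 2) (Fin 2) ℂ) +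
              l • !![0, u t; -2*z t/u t, 0] +
              !![z t + t/2, -(u t)*(y t);
                -2*((y t)*(z t) + θ)/u t, -(z t) - t/2]).mulVec (Y l t)) ∧
        (∀ l t : ℂ,
          (fun i => deriv (fun s => Y l s i) t) =
            ((l/2) • (!![1,0; 0,-1] : Matrix (Fin 2) (Fin 2) ℂ) +
              (1/2 : ℂ) • !![0, u t; -2*z t/u t, 0]).mulVec (Y l t))) := by
  have hlam : SolvesDJKTLambda θ y z Φ := hlam
  have ht : SolvesDJKTTime y z Φ := ht
  refine ⟨hlam.apply_two_eq, fun φ hφ => ?_, fun u hu hu0 hu' Y hY => ?_⟩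
  · obtain rfl : φ = fun l t => ![Φ l t 0, Φ l t 1] := funext₂ hφ
    exact ⟨hlam.reduced_eq, ht.reduced_eq hlam⟩
  · obtain rfl : Y = fun l t => exp (l^3/3 + l*t/2) • ![-(u t) * Φ l t 1, 2 * Φ l t 0] :=
      funext₂ hY
    exact ⟨hlam.jimboMiwa_eq hΦ hu0, ht.jimboMiwa_eq hlam hΦ hu hu0 hu'⟩

/-- If `Φ` is a holomorphic solution of the degenerate pair `dJKT₂¹`, then
`Φ₃ = −λΦ₁`, the vector `φ := (Φ₁,Φ₂)ᵀ` solves the corresponding `2×2` system,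
and, for any nowhere-vanishing `u` with `u' = −yu`, the vector
`Y := exp(λ³/3 + λt/2)·(−uΦ₂, 2Φ₁)ᵀ` solves the Jimbo–Miwa pair `JM₂` with
parameter `θ`. -/
theorem stmt_14 (θ : ℂ) (y z : ℂ → ℂ)
    (hy : Differentiable ℂ y) (hz : Differentiable ℂ z)
    (Φ : ℂ → ℂ → Fin 3 → ℂ)
    (hΦ : ∀ i, Differentiable ℂ (fun p : ℂ × ℂ => Φ p.1 p.2 i))
    (hlam : ∀ l t : ℂ,
      (!![1,0,0; 0,1,0; 0,0,0] : Matrix (Fin 3) (Fin 3) ℂ).mulVec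
          (fun i => deriv (fun w => Φ w t i) l) =
        (!![-(z t + t), l*(z t) + (y t)*(z t) + θ, 2*l;
            2*y t, z t, 2;
            l, 0, 1] : Matrix (Fin 3) (Fin 3) ℂ).mulVec (Φ l t))
    (ht : ∀ l t : ℂ,
      (fun i => deriv (fun s => Φ l s i) t) =
        ((1/2 : ℂ) • (!![0, z t, 2; -2, 2*y t, 0; 0, -l*(z t), -2*l] :
          Matrix (Fin 3) (Fin 3) ℂ)).mulVec (Φ l t)) :
    (∀ l t : ℂ, Φ l t 2 = -l * Φ l t 0) ∧
    (∀ φ : ℂ → ℂ → Fin 2 → ℂ,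
      (∀ l t : ℂ, φ l t = ![Φ l t 0, Φ l t 1]) →
      (∀ l t : ℂ,
        (fun i => deriv (fun w => φ w t i) l) =
          (-(l^2 • (!![2,0; 0,0] : Matrix (Fin 2) (Fin 2) ℂ) +
              l • !![0, -z t; 2, 0] +
              !![z t + t, -(y t)*(z t) - θ; -2*y t, -z t])).mulVec (φ l t)) ∧
      (∀ l t : ℂ,
        (fun i => deriv (fun s => φ l s i) t) =
          ((-(1/2) : ℂ) • (l • (!![2,0; 0,0] : Matrix (Fin 2) (Fin 2) ℂ) +
            !![0, -z t; 2, -2*y t])).mulVec (φ l t))) ∧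
    (∀ u : ℂ → ℂ, Differentiable ℂ u → (∀ t : ℂ, u t ≠ 0) →
      (∀ t : ℂ, deriv u t = -(y t) * u t) →
      ∀ Y : ℂ → ℂ → Fin 2 → ℂ,
        (∀ l t : ℂ,
          Y l t = Complex.exp (l^3/3 + l*t/2) • ![-(u t) * Φ l t 1, 2 * Φ l t 0]) →
        (∀ l t : ℂ,
          (fun i => deriv (fun w => Y w t i) l) =
            (l^2 • (!![1,0; 0,-1] : Matrix (Fin 2) (Fin 2) ℂ) +
              l • !![0, u t; -2*z t/u t, 0] +
              !![z t + t/2, -(u t)*(y t);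
                -2*((y t)*(z t) + θ)/u t, -(z t) - t/2]).mulVec (Y l t)) ∧
        (∀ l t : ℂ,
          (fun i => deriv (fun s => Y l s i) t) =
            ((l/2) • (!![1,0; 0,-1] : Matrix (Fin 2) (Fin 2) ℂ) +
              (1/2 : ℂ) • !![0, u t; -2*z t/u t, 0]).mulVec (Y l t))) :=
  stmt_14_general θ y z Φ hΦ hlam ht
end
end

section
/- Let θ ∈ ℂ and let y, z : ℂ → ℂ be holomorphic with z(t) ≠ 0, y′ = y² + z + t/2, and z′ = −2yz − θ for all t. Let χ = (χ₁,χ₂,χ₃) : (ℂ∖{0})×ℂ → ℂ³ be holomorphic and satisfy [[1,0,0],[0,0,0],[0,0,1]]·∂χ/∂μ = [[−(y+θ/z), −(y+θ/z), −μ+z+t],[−μ−z, −μ, −2yz],[0, 1/2, 0]]·χ and ∂χ/∂t = [[0, 0, μ−2z−t],[−(y+θ/z), −(y+θ/z), −μ+z+t],[1/2, 0, 0]]·χ. Then Ψ := [[0,0,1],[1/z, 1/z, 0],[0, −1/2, 0]]·χ satisfies the degenerate system [[0,z,2],[0,0,0],[1,0,0]]·∂Ψ/∂μ = [[−μ+z+t,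 −(yz+θ), 0],[−2y, −μ−z, −2],[0, 0, −1]]·Ψ and ∂Ψ/∂t = (1/2)·[[0, z, 2],[−2, 2y, 0],[μ−(z+t), yz+θ, 0]]·Ψ on (ℂ∖{0})×ℂ. -/
/-!
Write `Ψ = G χ` with `G = [[0,0,1],[1/z,1/z,0],[0,−1/2,0]]`; both equations for `Ψ` reduce to matrix
identities. In `μ`, the leading matrix `A` of the `Ψ`-system satisfies `A G = diag(1,0,1)`, the leading
matrix of the `χ`-system, and `B G` is the `χ` coefficient matrix with its middle row divided by `z`;
that scaling is harmless because the middle row of the `χ`-equation reads `0 = …`. In `t`,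
`Ψ_t = G_t χ + G χ_t`, and `G_t + G T = N G` once `z′ = −2yz − θ` is substituted into `G_t`, where `T`
and `N` are the coefficient matrices of the two `t`-equations.
-/

open Matrix

noncomputable section

section Derivative

variable {𝕜 : Type*} [NontriviallyNormedField 𝕜] {m n : Type*} [Fintype n]

theorem deriv_mulVec {G : 𝕜 → Matrix m n 𝕜} {v : 𝕜 → n → 𝕜} {t : 𝕜}
    (hG : ∀ i j, DifferentiableAt 𝕜 (fun s => G s i j) t)
    (hv : ∀ j, DifferentiableAt 𝕜 (fun s => v s j) t) :
    (fun i => deriv (fun s => (G s *ᵥ v s) i) t) =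
      Matrix.of (fun i j => deriv (fun s => G s i j) t) *ᵥ v t +
        G t *ᵥ fun j => deriv (fun s => v s j) t := by
  funext i
  simp only [mulVec, dotProduct, Pi.add_apply, of_apply, ← Finset.sum_add_distrib]
  rw [deriv_fun_sum fun j _ => (hG i j).fun_mul (hv j)]
  exact Finset.sum_congr rfl fun j _ => deriv_fun_mul (hG i j) (hv j)

theorem deriv_const_mulVec (G : Matrix m n 𝕜) {v : 𝕜 → n → 𝕜} {t : 𝕜}
    (hv : ∀ j, DifferentiableAt 𝕜 (fun s => v s j) t) :
    (fun i => deriv (fun s => (G *ᵥ v s) i) t) = G *ᵥ fun j => deriv (fun s => v s j) t := by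
  rw [deriv_mulVec (G := fun _ => G) (fun _ _ => differentiableAt_const _) hv]
  funext i
  simp [mulVec, dotProduct]

end Derivative

theorem DifferentiableAt.comp_prodMk_left {𝕜 E F G : Type*} [NontriviallyNormedField 𝕜]
    [NormedAddCommGroup E] [NormedSpace 𝕜 E] [NormedAddCommGroup F] [NormedSpace 𝕜 F]
    [NormedAddCommGroup G] [NormedSpace 𝕜 G] {f : E × F → G} {a : E} {b : F}
    (hf : DifferentiableAt 𝕜 f (a, b)) : DifferentiableAt 𝕜 (fun x => f (x, b)) a :=
  hf.comp a (differentiableAt_id.prodMk (differentiableAt_const b))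

theorem DifferentiableAt.comp_prodMk_right {𝕜 E F G : Type*} [NontriviallyNormedField 𝕜]
    [NormedAddCommGroup E] [NormedSpace 𝕜 E] [NormedAddCommGroup F] [NormedSpace 𝕜 F]
    [NormedAddCommGroup G] [NormedSpace 𝕜 G] {f : E × F → G} {a : E} {b : F}
    (hf : DifferentiableAt 𝕜 f (a, b)) : DifferentiableAt 𝕜 (fun x => f (a, x)) b :=
  hf.comp b ((differentiableAt_const a).prodMk differentiableAt_id)

def psiGauge (z : ℂ) : Matrix (Fin 3) (Fin 3) ℂ := !![0, 0, 1; z⁻¹, z⁻¹, 0; 0, -1/2, 0]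

def psiGaugeDeriv (z dz : ℂ) : Matrix (Fin 3) (Fin 3) ℂ :=
  !![0, 0, 0; -dz / z ^ 2, -dz / z ^ 2, 0; 0, 0, 0]

def chiMuLead : Matrix (Fin 3) (Fin 3) ℂ := !![1, 0, 0; 0, 0, 0; 0, 0, 1]

def chiMuCoeff (θ y z μ t : ℂ) : Matrix (Fin 3) (Fin 3) ℂ :=
  !![-(y + θ/z), -(y + θ/z), -μ + z + t; -μ - z, -μ, -2*y*z; 0, 1/2, 0]

def chiTCoeff (θ y z μ t : ℂ) : Matrix (Fin 3) (Fin 3) ℂ :=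
  !![0, 0, μ - 2*z - t; -(y + θ/z), -(y + θ/z), -μ + z + t; 1/2, 0, 0]

def psiMuLead (z : ℂ) : Matrix (Fin 3) (Fin 3) ℂ := !![0, z, 2; 0, 0, 0; 1, 0, 0]

def psiMuCoeff (θ y z μ t : ℂ) : Matrix (Fin 3) (Fin 3) ℂ :=
  !![-μ + z + t, -(y*z + θ), 0; -2*y, -μ - z, -2; 0, 0, -1]

def psiTCoeff (θ y z μ t : ℂ) : Matrix (Fin 3) (Fin 3) ℂ :=
  (1/2 : ℂ) • !![0, z, 2; -2, 2*y, 0; μ - (z + t), y*z + θ, 0]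

section GaugeIdentities

variable {θ y z μ t : ℂ}

theorem psiMuLead_mul_psiGauge (hz : z ≠ 0) : psiMuLead z * psiGauge z = chiMuLead := by
  ext i j
  fin_cases i <;> fin_cases j <;>
    simp [psiMuLead, psiGauge, chiMuLead, mul_apply, Fin.sum_univ_three, hz]
  norm_num

theorem psiMuCoeff_mul_psiGauge (hz : z ≠ 0) :
    psiMuCoeff θ y z μ t * psiGauge z = !![1, 0, 0; 0, z⁻¹, 0; 0, 0, 1] * chiMuCoeff θ y z μ t := by
  ext i j
  fin_cases i <;> fin_cases j <;>
    simp [psiMuCoeff, psiGauge, chiMuCoeff, mul_apply, Fin.sum_univ_three]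
  all_goals field_simp
  ring

theorem psiGaugeDeriv_add_psiGauge_mul_chiTCoeff (hz : z ≠ 0) :
    psiGaugeDeriv z (-2*y*z - θ) + psiGauge z * chiTCoeff θ y z μ t =
      psiTCoeff θ y z μ t * psiGauge z := by
  ext i j
  fin_cases i <;> fin_cases j <;>
    simp [psiGaugeDeriv, psiGauge, chiTCoeff, psiTCoeff, mul_apply, Fin.sum_univ_three] <;>
    field_simp <;> ring

theorem psiMu_equation_of_chiMu_equation (hz : z ≠ 0) {χ dχ : Fin 3 → ℂ}
    (h : chiMuLead *ᵥ dχ = chiMuCoeff θ y z μ t *ᵥ χ) :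
    psiMuLead z *ᵥ (psiGauge z *ᵥ dχ) = psiMuCoeff θ y z μ t *ᵥ (psiGauge z *ᵥ χ) := by
  have hlead : !![1, 0, 0; 0, z⁻¹, 0; 0, 0, 1] * chiMuLead = chiMuLead := by
    ext i j; fin_cases i <;> fin_cases j <;> simp [chiMuLead, mul_apply, Fin.sum_univ_three]
  calc psiMuLead z *ᵥ (psiGauge z *ᵥ dχ)
      = (!![1, 0, 0; 0, z⁻¹, 0; 0, 0, 1] * chiMuLead) *ᵥ dχ := by
        rw [mulVec_mulVec, psiMuLead_mul_psiGauge hz, hlead]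
    _ = (psiMuCoeff θ y z μ t * psiGauge z) *ᵥ χ := by
        rw [← mulVec_mulVec, h, mulVec_mulVec, psiMuCoeff_mul_psiGauge hz]
    _ = psiMuCoeff θ y z μ t *ᵥ (psiGauge z *ᵥ χ) := (mulVec_mulVec _ _ _).symm

theorem psiT_equation_of_chiT_equation (hz : z ≠ 0) {χ dχ : Fin 3 → ℂ}
    (h : dχ = chiTCoeff θ y z μ t *ᵥ χ) :
    psiGaugeDeriv z (-2*y*z - θ) *ᵥ χ + psiGauge z *ᵥ dχ =
      psiTCoeff θ y z μ t *ᵥ (psiGauge z *ᵥ χ) := by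
  rw [h, mulVec_mulVec, ← add_mulVec, psiGaugeDeriv_add_psiGauge_mul_chiTCoeff hz, mulVec_mulVec]

end GaugeIdentities

theorem differentiableAt_psiGauge_comp {z : ℂ → ℂ} {t : ℂ} (hz : DifferentiableAt ℂ z t)
    (hz0 : z t ≠ 0) (i j : Fin 3) : DifferentiableAt ℂ (fun s => psiGauge (z s) i j) t := by
  fin_cases i <;> fin_cases j <;> simp [psiGauge] <;> exact hz.inv hz0

theorem deriv_psiGauge_comp {z : ℂ → ℂ} {t : ℂ} (hz : DifferentiableAt ℂ z t) (hz0 : z t ≠ 0) :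
    Matrix.of (fun i j => deriv (fun s => psiGauge (z s) i j) t) =
      psiGaugeDeriv (z t) (deriv z t) := by
  ext i j
  fin_cases i <;> fin_cases j <;> simp [psiGauge, psiGaugeDeriv, deriv_fun_inv'' hz hz0]

theorem stmt_15_general (θ : ℂ) (y z : ℂ → ℂ)
    (hz : Differentiable ℂ z)
    (hz0 : ∀ t : ℂ, z t ≠ 0)
    (hz' : ∀ t : ℂ, deriv z t = -2*(y t)*(z t) - θ)
    (χ : ℂ → ℂ → Fin 3 → ℂ)
    (hχ : ∀ i, DifferentiableOn ℂ (fun p : ℂ × ℂ => χ p.1 p.2 i) {p | p.1 ≠ 0})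
    (hμeq : ∀ μ : ℂ, μ ≠ 0 → ∀ t : ℂ,
      (!![1,0,0; 0,0,0; 0,0,1] : Matrix (Fin 3) (Fin 3) ℂ).mulVec
          (fun i => deriv (fun m => χ m t i) μ) =
        (!![-(y t + θ/z t), -(y t + θ/z t), -μ + z t + t;
            -μ - z t, -μ, -2*(y t)*(z t);
            0, 1/2, 0] : Matrix (Fin 3) (Fin 3) ℂ).mulVec (χ μ t))
    (hteq : ∀ μ : ℂ, μ ≠ 0 → ∀ t : ℂ,
      (fun i => deriv (fun s => χ μ s i) t) =
        (!![0, 0, μ - 2*z t - t;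
            -(y t + θ/z t), -(y t + θ/z t), -μ + z t + t;
            1/2, 0, 0] : Matrix (Fin 3) (Fin 3) ℂ).mulVec (χ μ t))
    (Ψ : ℂ → ℂ → Fin 3 → ℂ)
    (hΨ : ∀ μ t : ℂ,
      Ψ μ t = (!![0, 0, 1; (z t)⁻¹, (z t)⁻¹, 0; 0, -1/2, 0] :
        Matrix (Fin 3) (Fin 3) ℂ).mulVec (χ μ t)) :
    ∀ μ : ℂ, μ ≠ 0 → ∀ t : ℂ,
      ((!![0, z t, 2; 0,0,0; 1,0,0] : Matrix (Fin 3) (Fin 3) ℂ).mulVec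
          (fun i => deriv (fun m => Ψ m t i) μ) =
        (!![-μ + z t + t, -((y t)*(z t) + θ), 0;
            -2*y t, -μ - z t, -2;
            0, 0, -1] : Matrix (Fin 3) (Fin 3) ℂ).mulVec (Ψ μ t)) ∧
      ((fun i => deriv (fun s => Ψ μ s i) t) =
        ((1/2 : ℂ) • (!![0, z t, 2;
            -2, 2*y t, 0;
            μ - (z t + t), (y t)*(z t) + θ, 0] :
          Matrix (Fin 3) (Fin 3) ℂ)).mulVec (Ψ μ t)) := by
  intro μ hμ t
  have hχ_at : ∀ i, DifferentiableAt ℂ (fun p : ℂ × ℂ => χ p.1 p.2 i) (μ, t) := fun i =>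
    (hχ i).differentiableAt ((isOpen_ne_fun continuous_fst continuous_const).mem_nhds hμ)
  have hΨ_gauge : Ψ = fun m s => psiGauge (z s) *ᵥ χ m s := funext fun m => funext (hΨ m)
  subst hΨ_gauge
  constructor
  · rw [deriv_const_mulVec _ fun i => (hχ_at i).comp_prodMk_left]
    exact psiMu_equation_of_chiMu_equation (hz0 t) (hμeq μ hμ t)
  · rw [deriv_mulVec (differentiableAt_psiGauge_comp (hz t) (hz0 t))
      fun i => (hχ_at i).comp_prodMk_right, deriv_psiGauge_comp (hz t) (hz0 t), hz' t]
    exact psiT_equation_of_chiT_equation (hz0 t) (hteq μ hμ t)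

/-- The gauge transformation `Ψ := [[0,0,1],[1/z,1/z,0],[0,−1/2,0]]·χ` maps a
holomorphic solution `χ` of system (5.5) of the paper to a solution `Ψ` of the
degenerate pair `dJKT₂²` with parameter `θ` on `(ℂ∖{0})×ℂ`. -/
theorem stmt_15 (θ : ℂ) (y z : ℂ → ℂ)
    (hy : Differentiable ℂ y) (hz : Differentiable ℂ z)
    (hz0 : ∀ t : ℂ, z t ≠ 0)
    (hy' : ∀ t : ℂ, deriv y t = (y t)^2 + z t + t/2)
    (hz' : ∀ t : ℂ, deriv z t = -2*(y t)*(z t) - θ)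
    (χ : ℂ → ℂ → Fin 3 → ℂ)
    (hχ : ∀ i, DifferentiableOn ℂ (fun p : ℂ × ℂ => χ p.1 p.2 i) {p | p.1 ≠ 0})
    (hμeq : ∀ μ : ℂ, μ ≠ 0 → ∀ t : ℂ,
      (!![1,0,0; 0,0,0; 0,0,1] : Matrix (Fin 3) (Fin 3) ℂ).mulVec
          (fun i => deriv (fun m => χ m t i) μ) =
        (!![-(y t + θ/z t), -(y t + θ/z t), -μ + z t + t;
            -μ - z t, -μ, -2*(y t)*(z t);
            0, 1/2, 0] : Matrix (Fin 3) (Fin 3) ℂ).mulVec (χ μ t))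
    (hteq : ∀ μ : ℂ, μ ≠ 0 → ∀ t : ℂ,
      (fun i => deriv (fun s => χ μ s i) t) =
        (!![0, 0, μ - 2*z t - t;
            -(y t + θ/z t), -(y t + θ/z t), -μ + z t + t;
            1/2, 0, 0] : Matrix (Fin 3) (Fin 3) ℂ).mulVec (χ μ t))
    (Ψ : ℂ → ℂ → Fin 3 → ℂ)
    (hΨ : ∀ μ t : ℂ,
      Ψ μ t = (!![0, 0, 1; (z t)⁻¹, (z t)⁻¹, 0; 0, -1/2, 0] :
        Matrix (Fin 3) (Fin 3) ℂ).mulVec (χ μ t)) :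
    ∀ μ : ℂ, μ ≠ 0 → ∀ t : ℂ,
      ((!![0, z t, 2; 0,0,0; 1,0,0] : Matrix (Fin 3) (Fin 3) ℂ).mulVec
          (fun i => deriv (fun m => Ψ m t i) μ) =
        (!![-μ + z t + t, -((y t)*(z t) + θ), 0;
            -2*y t, -μ - z t, -2;
            0, 0, -1] : Matrix (Fin 3) (Fin 3) ℂ).mulVec (Ψ μ t)) ∧
      ((fun i => deriv (fun s => Ψ μ s i) t) =
        ((1/2 : ℂ) • (!![0, z t, 2;
            -2, 2*y t, 0;
            μ - (z t + t), (y t)*(z t) + θ, 0] :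
          Matrix (Fin 3) (Fin 3) ℂ)).mulVec (Ψ μ t)) :=
  stmt_15_general θ y z hz hz0 hz' χ hχ hμeq hteq Ψ hΨ
end
end

section
/- Let θ ∈ ℂ and let y, z : ℂ → ℂ be holomorphic with z(t) ≠ 0 for all t. Let χ = (χ₁,χ₂,χ₃) : (ℂ∖{0})×ℂ → ℂ³ be holomorphic and satisfy [[1,0,0],[0,0,0],[0,0,1]]·∂χ/∂μ = [[−(y+θ/z), −(y+θ/z), −μ+z+t],[−μ−z, −μ, −2yz],[0, 1/2, 0]]·χ and ∂χ/∂t = [[0, 0, μ−2z−t],[−(y+θ/z), −(y+θ/z), −μ+z+t],[1/2, 0, 0]]·χ. Then χ₂ = −χ₁ − (z·χ₁ + 2yz·χ₃)/μ for all (μ,t), and ψ := (χ₁, χ₃)ᵀ satisfies ∂ψ/∂μ = (μ·[[0,−1],[0,0]] + [[0, z+t],[−1/2, 0]] + (1/μ)·[[yz+θ, 2yz(y+θ/z)],[−z/2, −yz]])·ψ and ∂ψ/∂t = (μ·[[0,1],[0,0]] + [[0, −2z−t],[1/2, 0]])·ψ. -/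
/-!
The coefficient matrix of `∂χ/∂μ` has a zero middle row, so the middle row of the μ-equation is
an algebraic constraint: it expresses `χ₂` through `χ₁` and `χ₃`. Substituting it into the
first and third rows of both equations eliminates `χ₂`, which leaves a closed `2×2` system for
`(χ₁, χ₃)`; the factor `θ/z` is cleared using `z ≠ 0`.
-/

open Matrix Complex

noncomputable section

theorem deriv_apply_of_eq_vecCons_two {𝕜 E : Type*} [NontriviallyNormedField 𝕜]
    [NormedAddCommGroup E] [NormedSpace 𝕜 E] {f g : 𝕜 → E} {ψ : 𝕜 → Fin 2 → E}
    (hψ : ∀ x, ψ x = ![f x, g x]) (x : 𝕜) :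
    (fun i => deriv (fun x => ψ x i) x) = ![deriv f x, deriv g x] := by
  ext i
  fin_cases i <;> simp [hψ]

section

variable {θ y z μ t : ℂ} {c d : Fin 3 → ℂ}

theorem apply_one_eq_of_mu_system (hμ : μ ≠ 0)
    (h : (!![1,0,0; 0,0,0; 0,0,1] : Matrix (Fin 3) (Fin 3) ℂ) *ᵥ d =
      !![-(y + θ/z), -(y + θ/z), -μ + z + t; -μ - z, -μ, -2*y*z; 0, 1/2, 0] *ᵥ c) :
    c 1 = -c 0 - (z * c 0 + 2*y*z * c 2)/μ := by
  have h1 : 0 = (-μ - z) * c 0 - μ * c 1 - 2*y*z * c 2 := by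
    simpa [mulVec, dotProduct, Fin.sum_univ_three, sub_eq_add_neg] using congrFun h 1
  field_simp
  linear_combination h1

theorem reduce_mu_system (hz : z ≠ 0) (hμ : μ ≠ 0)
    (h : (!![1,0,0; 0,0,0; 0,0,1] : Matrix (Fin 3) (Fin 3) ℂ) *ᵥ d =
      !![-(y + θ/z), -(y + θ/z), -μ + z + t; -μ - z, -μ, -2*y*z; 0, 1/2, 0] *ᵥ c) :
    ![d 0, d 2] = (μ • !![0,-1; 0,0] + !![0, z + t; -1/2, 0] +
      (1/μ) • !![y*z + θ, 2*y*z*(y + θ/z); -z/2, -y*z]) *ᵥ ![c 0, c 2] := by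
  have h0 : d 0 = -(y + θ/z) * (c 0 + c 1) + (-μ + z + t) * c 2 := by
    simpa [mulVec, dotProduct, Fin.sum_univ_three, mul_add, add_assoc] using congrFun h 0
  have h2 : d 2 = c 1 / 2 := by
    simpa [mulVec, dotProduct, Fin.sum_univ_three, div_eq_inv_mul] using congrFun h 2
  have hc₁ := apply_one_eq_of_mu_system hμ h
  ext i
  fin_cases i <;> simp [mulVec, dotProduct, Fin.sum_univ_two, h0, h2, hc₁] <;> field_simp <;> ring

theorem reduce_t_system
    (h : d = !![0, 0, μ - 2*z - t; -(y + θ/z), -(y + θ/z), -μ + z + t; 1/2, 0, 0] *ᵥ c) :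
    ![d 0, d 2] = (μ • !![0,1; 0,0] + !![0, -2*z - t; 1/2, 0]) *ᵥ ![c 0, c 2] := by
  have h0 : d 0 = (μ - 2*z - t) * c 2 := by
    simpa [mulVec, dotProduct, Fin.sum_univ_three] using congrFun h 0
  have h2 : d 2 = c 0 / 2 := by
    simpa [mulVec, dotProduct, Fin.sum_univ_three, div_eq_inv_mul] using congrFun h 2
  ext i
  fin_cases i <;>
    simp [mulVec, dotProduct, Fin.sum_univ_two, h0, h2, sub_eq_add_neg, add_assoc, div_eq_inv_mul]

end

theorem stmt_16_general (θ : ℂ) (y z : ℂ → ℂ)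
    (hz0 : ∀ t : ℂ, z t ≠ 0)
    (χ : ℂ → ℂ → Fin 3 → ℂ)
    (hμeq : ∀ μ : ℂ, μ ≠ 0 → ∀ t : ℂ,
      (!![1,0,0; 0,0,0; 0,0,1] : Matrix (Fin 3) (Fin 3) ℂ).mulVec
          (fun i => deriv (fun m => χ m t i) μ) =
        (!![-(y t + θ/z t), -(y t + θ/z t), -μ + z t + t;
            -μ - z t, -μ, -2*(y t)*(z t);
            0, 1/2, 0] : Matrix (Fin 3) (Fin 3) ℂ).mulVec (χ μ t))
    (hteq : ∀ μ : ℂ, μ ≠ 0 → ∀ t : ℂ,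
      (fun i => deriv (fun s => χ μ s i) t) =
        (!![0, 0, μ - 2*z t - t;
            -(y t + θ/z t), -(y t + θ/z t), -μ + z t + t;
            1/2, 0, 0] : Matrix (Fin 3) (Fin 3) ℂ).mulVec (χ μ t)) :
    (∀ μ : ℂ, μ ≠ 0 → ∀ t : ℂ,
      χ μ t 1 = -χ μ t 0 - (z t * χ μ t 0 + 2*(y t)*(z t) * χ μ t 2)/μ) ∧
    (∀ ψ : ℂ → ℂ → Fin 2 → ℂ,
      (∀ μ t : ℂ, ψ μ t = ![χ μ t 0, χ μ t 2]) →
      (∀ μ : ℂ, μ ≠ 0 → ∀ t : ℂ,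
        (fun i => deriv (fun m => ψ m t i) μ) =
          (μ • (!![0,-1; 0,0] : Matrix (Fin 2) (Fin 2) ℂ) +
            !![0, z t + t; -1/2, 0] +
            (1/μ) • !![(y t)*(z t) + θ, 2*(y t)*(z t)*(y t + θ/z t);
              -(z t)/2, -(y t)*(z t)]).mulVec (ψ μ t)) ∧
      (∀ μ : ℂ, μ ≠ 0 → ∀ t : ℂ,
        (fun i => deriv (fun s => ψ μ s i) t) =
          (μ • (!![0,1; 0,0] : Matrix (Fin 2) (Fin 2) ℂ) +
            !![0, -2*z t - t; 1/2, 0]).mulVec (ψ μ t))) := by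
  refine ⟨fun μ hμ t => apply_one_eq_of_mu_system hμ (hμeq μ hμ t), fun ψ hψ => ⟨?_, ?_⟩⟩
  · intro μ hμ t
    rw [deriv_apply_of_eq_vecCons_two (fun m => hψ m t), hψ]
    exact reduce_mu_system (hz0 t) hμ (hμeq μ hμ t)
  · intro μ hμ t
    rw [deriv_apply_of_eq_vecCons_two (hψ μ), hψ]
    exact reduce_t_system (hteq μ hμ t)

/-- If `χ` is a holomorphic solution of system (5.5) of the paper on `(ℂ∖{0})×ℂ`,
then `χ₂ = −χ₁ − (zχ₁ + 2yzχ₃)/μ`, and `ψ := (χ₁,χ₃)ᵀ` solves the corresponding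
`2×2` system. -/
theorem stmt_16 (θ : ℂ) (y z : ℂ → ℂ)
    (hy : Differentiable ℂ y) (hz : Differentiable ℂ z)
    (hz0 : ∀ t : ℂ, z t ≠ 0)
    (χ : ℂ → ℂ → Fin 3 → ℂ)
    (hχ : ∀ i, DifferentiableOn ℂ (fun p : ℂ × ℂ => χ p.1 p.2 i) {p | p.1 ≠ 0})
    (hμeq : ∀ μ : ℂ, μ ≠ 0 → ∀ t : ℂ,
      (!![1,0,0; 0,0,0; 0,0,1] : Matrix (Fin 3) (Fin 3) ℂ).mulVec
          (fun i => deriv (fun m => χ m t i) μ) =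
        (!![-(y t + θ/z t), -(y t + θ/z t), -μ + z t + t;
            -μ - z t, -μ, -2*(y t)*(z t);
            0, 1/2, 0] : Matrix (Fin 3) (Fin 3) ℂ).mulVec (χ μ t))
    (hteq : ∀ μ : ℂ, μ ≠ 0 → ∀ t : ℂ,
      (fun i => deriv (fun s => χ μ s i) t) =
        (!![0, 0, μ - 2*z t - t;
            -(y t + θ/z t), -(y t + θ/z t), -μ + z t + t;
            1/2, 0, 0] : Matrix (Fin 3) (Fin 3) ℂ).mulVec (χ μ t)) :
    (∀ μ : ℂ, μ ≠ 0 → ∀ t : ℂ,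
      χ μ t 1 = -χ μ t 0 - (z t * χ μ t 0 + 2*(y t)*(z t) * χ μ t 2)/μ) ∧
    (∀ ψ : ℂ → ℂ → Fin 2 → ℂ,
      (∀ μ t : ℂ, ψ μ t = ![χ μ t 0, χ μ t 2]) →
      (∀ μ : ℂ, μ ≠ 0 → ∀ t : ℂ,
        (fun i => deriv (fun m => ψ m t i) μ) =
          (μ • (!![0,-1; 0,0] : Matrix (Fin 2) (Fin 2) ℂ) +
            !![0, z t + t; -1/2, 0] +
            (1/μ) • !![(y t)*(z t) + θ, 2*(y t)*(z t)*(y t + θ/z t);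
              -(z t)/2, -(y t)*(z t)]).mulVec (ψ μ t)) ∧
      (∀ μ : ℂ, μ ≠ 0 → ∀ t : ℂ,
        (fun i => deriv (fun s => ψ μ s i) t) =
          (μ • (!![0,1; 0,0] : Matrix (Fin 2) (Fin 2) ℂ) +
            !![0, -2*z t - t; 1/2, 0]).mulVec (ψ μ t))) :=
  stmt_16_general θ y z hz0 χ hμeq hteq
end
end

section
/- Let α ∈ ℂ, θ = 1/2 − α, and let y : ℂ → ℂ be a holomorphic solution of y″ = 2y³ + t·y + α; set z(t) := y′(t) − y(t)² − t/2. Let v : ℂ → ℂ be holomorphic with v(t) ≠ 0 and v′(t) = −(1/2)·y(t)·v(t) for all t, and set u := v². Let Y be a holomorphic solution on ℂ² of the Jimbo–Miwa pair JM₂ with parameter θ and coefficient functions u, y, z. Then M(λ,t) := [[λ+y, 1],[1, 0]]·[[1/v, 0],[0, v]]·Y(λ,t) satisfies the Conte–Musette pair: ∂M/∂λ = (λ³·[[0,1],[0,0]] + λ²·[[0,y],[0,0]] + λ·[[0, y²+t],[1, 0]] + [[−y′, y³+ty+2α],[−y, y′]])·M and ∂M/∂t = ((λ²/2)·[[0,1],[0,0]]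 + λ·[[0,y],[0,0]] + [[0, (3y²+t)/2],[1/2, 0]])·M. -/
/-!
If `∂Y = A Y` and `M = G Y`, then `∂M = B M` as soon as `∂G + G A = B G`. For the gauge
`G = [[λ+y, 1], [1, 0]]·diag(1/v, v)` both identities, in `λ` and in `t`, are entrywise rational
identities in `y, y', v`, once `z = y' − y² − t/2`, `u = v²`, `θ = 1/2 − α` and `v' = −yv/2` are
substituted.
-/

open Matrix Complex

noncomputable section

section EntrywiseDerivative

variable {𝕜 : Type*} [NontriviallyNormedField 𝕜] {l m n : Type*} {x : 𝕜}

/-- Matrices carry no global norm instance, so derivatives of matrix-valued maps are taken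
entrywise. -/
def HasEntrywiseDerivAt (G : 𝕜 → Matrix m n 𝕜) (G' : Matrix m n 𝕜) (x : 𝕜) : Prop :=
  ∀ i j, HasDerivAt (fun x => G x i j) (G' i j) x

theorem hasEntrywiseDerivAt_of_fin_two {a b c d : 𝕜 → 𝕜} {a' b' c' d' : 𝕜}
    (ha : HasDerivAt a a' x) (hb : HasDerivAt b b' x) (hc : HasDerivAt c c' x)
    (hd : HasDerivAt d d' x) :
    HasEntrywiseDerivAt (fun x => !![a x, b x; c x, d x]) !![a', b'; c', d'] x := by
  simpa [HasEntrywiseDerivAt, Fin.forall_fin_two] using ⟨⟨ha, hb⟩, hc, hd⟩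

theorem HasEntrywiseDerivAt.mul [Fintype m] {A : 𝕜 → Matrix l m 𝕜} {A' : Matrix l m 𝕜}
    {B : 𝕜 → Matrix m n 𝕜} {B' : Matrix m n 𝕜}
    (hA : HasEntrywiseDerivAt A A' x) (hB : HasEntrywiseDerivAt B B' x) :
    HasEntrywiseDerivAt (fun x => A x * B x) (A' * B x + A x * B') x := fun i j => by
  simpa only [Matrix.add_apply, mul_apply, Finset.sum_add_distrib] using
    HasDerivAt.fun_sum (u := Finset.univ) fun k _ => (hA i k).fun_mul (hB k j)

theorem HasEntrywiseDerivAt.mulVec [Fintype m] [Fintype n] {G : 𝕜 → Matrix m n 𝕜}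
    {G' : Matrix m n 𝕜} {Y : 𝕜 → n → 𝕜} {Y' : n → 𝕜}
    (hG : HasEntrywiseDerivAt G G' x) (hY : HasDerivAt Y Y' x) :
    HasDerivAt (fun x => G x *ᵥ Y x) (G' *ᵥ Y x + G x *ᵥ Y') x := by
  refine hasDerivAt_pi.2 fun i => ?_
  show HasDerivAt (fun x => ∑ j, G x i j * Y x j)
    (∑ j, G' i j * Y x j + ∑ j, G x i j * Y' j) x
  rw [← Finset.sum_add_distrib]
  exact HasDerivAt.fun_sum (u := Finset.univ) fun j _ =>
    (hG i j).fun_mul (hasDerivAt_pi.1 hY j)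

theorem HasDerivAt.gauge_transform [Fintype m] [Fintype n] {G : 𝕜 → Matrix m n 𝕜}
    {G' : Matrix m n 𝕜} {A : Matrix n n 𝕜} {B : Matrix m m 𝕜} {Y : 𝕜 → n → 𝕜}
    (hY : HasDerivAt Y (A *ᵥ Y x) x) (hG : HasEntrywiseDerivAt G G' x)
    (hGAB : G' + G x * A = B * G x) :
    HasDerivAt (fun x => G x *ᵥ Y x) (B *ᵥ (G x *ᵥ Y x)) x := by
  rw [mulVec_mulVec, ← hGAB, add_mulVec, ← mulVec_mulVec]
  exact hG.mulVec hY

theorem hasDerivAt_pi_of_deriv_eq {ι : Type*} [Fintype ι] {f : 𝕜 → ι → 𝕜} {f' : ι → 𝕜}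
    (hf : ∀ i, DifferentiableAt 𝕜 (fun x => f x i) x)
    (h : (fun i => deriv (fun x => f x i) x) = f') : HasDerivAt f f' x :=
  h ▸ hasDerivAt_pi.2 fun i => (hf i).hasDerivAt

end EntrywiseDerivative

def jimboMiwaLambda (θ u y z l t : ℂ) : Matrix (Fin 2) (Fin 2) ℂ :=
  l ^ 2 • !![1, 0; 0, -1] + l • !![0, u; -2 * z / u, 0] +
    !![z + t / 2, -u * y; -2 * (y * z + θ) / u, -z - t / 2]

def jimboMiwaTime (u z l : ℂ) : Matrix (Fin 2) (Fin 2) ℂ :=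
  (l / 2) • !![1, 0; 0, -1] + (1 / 2 : ℂ) • !![0, u; -2 * z / u, 0]

def conteMusetteLambda (α y y' l t : ℂ) : Matrix (Fin 2) (Fin 2) ℂ :=
  l ^ 3 • !![0, 1; 0, 0] + l ^ 2 • !![0, y; 0, 0] + l • !![0, y ^ 2 + t; 1, 0] +
    !![-y', y ^ 3 + t * y + 2 * α; -y, y']

def conteMusetteTime (y l t : ℂ) : Matrix (Fin 2) (Fin 2) ℂ :=
  (l ^ 2 / 2) • !![0, 1; 0, 0] + l • !![0, y; 0, 0] + !![0, (3 * y ^ 2 + t) / 2; 1 / 2, 0]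

def conteMusetteGauge (y v l : ℂ) : Matrix (Fin 2) (Fin 2) ℂ :=
  !![l + y, 1; 1, 0] * !![v⁻¹, 0; 0, v]

theorem hasEntrywiseDerivAt_conteMusetteGauge_lambda (y v l : ℂ) :
    HasEntrywiseDerivAt (conteMusetteGauge y v) (!![1, 0; 0, 0] * !![v⁻¹, 0; 0, v]) l := by
  have hD := hasEntrywiseDerivAt_of_fin_two (x := l) (hasDerivAt_const l v⁻¹)
    (hasDerivAt_const l 0) (hasDerivAt_const l 0) (hasDerivAt_const l v)
  have h := (hasEntrywiseDerivAt_of_fin_two ((hasDerivAt_id' l).add_const y)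
    (hasDerivAt_const l 1) (hasDerivAt_const l 1) (hasDerivAt_const l 0)).mul hD
  rwa [show (!![0, 0; 0, 0] : Matrix (Fin 2) (Fin 2) ℂ) = 0 from (eta_fin_two 0).symm,
    mul_zero, add_zero] at h

theorem hasEntrywiseDerivAt_conteMusetteGauge_time {y v : ℂ → ℂ} {y' v' t : ℂ} (l : ℂ)
    (hy : HasDerivAt y y' t) (hv : HasDerivAt v v' t) (hv0 : v t ≠ 0) :
    HasEntrywiseDerivAt (fun s => conteMusetteGauge (y s) (v s) l)
      (!![y', 0; 0, 0] * !![(v t)⁻¹, 0; 0, v t] +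
        !![l + y t, 1; 1, 0] * !![-v' / v t ^ 2, 0; 0, v']) t :=
  (hasEntrywiseDerivAt_of_fin_two (hy.const_add l) (hasDerivAt_const t 1)
      (hasDerivAt_const t 1) (hasDerivAt_const t 0)).mul
    (hasEntrywiseDerivAt_of_fin_two (hv.inv hv0) (hasDerivAt_const t 0)
      (hasDerivAt_const t 0) hv)

theorem conteMusetteGauge_lambda_eq {α θ y y' z u v l t : ℂ} (hθ : θ = 1 / 2 - α)
    (hz : z = y' - y ^ 2 - t / 2) (hv : v ≠ 0) (hu : u = v ^ 2) :
    !![1, 0; 0, 0] * !![v⁻¹, 0; 0, v] + conteMusetteGauge y v l * jimboMiwaLambda θ u y z l t =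
      conteMusetteLambda α y y' l t * conteMusetteGauge y v l := by
  subst hθ hz hu
  ext i j
  fin_cases i <;> fin_cases j <;>
    simp only [conteMusetteGauge, jimboMiwaLambda, conteMusetteLambda, mul_apply,
      Matrix.add_apply, Matrix.smul_apply, of_apply, cons_val', cons_val_zero, cons_val_one,
      empty_val', cons_val_fin_one, Fin.sum_univ_two, smul_eq_mul, Fin.zero_eta, Fin.mk_one] <;>
    field_simp <;> ring

theorem conteMusetteGauge_time_eq {y y' z u v v' l t : ℂ}
    (hz : z = y' - y ^ 2 - t / 2) (hv : v ≠ 0) (hu : u = v ^ 2)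
    (hv' : v' = -(1 / 2) * y * v) :
    !![y', 0; 0, 0] * !![v⁻¹, 0; 0, v] + !![l + y, 1; 1, 0] * !![-v' / v ^ 2, 0; 0, v'] +
        conteMusetteGauge y v l * jimboMiwaTime u z l =
      conteMusetteTime y l t * conteMusetteGauge y v l := by
  subst hz hu hv'
  ext i j
  fin_cases i <;> fin_cases j <;>
    simp only [conteMusetteGauge, jimboMiwaTime, conteMusetteTime, mul_apply,
      Matrix.add_apply, Matrix.smul_apply, of_apply, cons_val', cons_val_zero, cons_val_one,
      empty_val', cons_val_fin_one, Fin.sum_univ_two, smul_eq_mul, Fin.zero_eta, Fin.mk_one] <;>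
    field_simp <;> ring

theorem stmt_19_general (α θ : ℂ) (hθ : θ = 1/2 - α)
    (y : ℂ → ℂ) (hy : Differentiable ℂ y)
    (z : ℂ → ℂ) (hz : ∀ t : ℂ, z t = deriv y t - (y t)^2 - t/2)
    (v : ℂ → ℂ) (hv : Differentiable ℂ v) (hv0 : ∀ t : ℂ, v t ≠ 0)
    (hv' : ∀ t : ℂ, deriv v t = -(1/2) * y t * v t)
    (u : ℂ → ℂ) (hu : ∀ t : ℂ, u t = (v t)^2)
    (Y : ℂ → ℂ → Fin 2 → ℂ)
    (hYdiff : ∀ i, Differentiable ℂ (fun p : ℂ × ℂ => Y p.1 p.2 i))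
    (hYlam : ∀ l t : ℂ,
      (fun i => deriv (fun w => Y w t i) l) =
        (l^2 • (!![1,0; 0,-1] : Matrix (Fin 2) (Fin 2) ℂ) +
          l • !![0, u t; -2*z t/u t, 0] +
          !![z t + t/2, -(u t)*(y t);
            -2*((y t)*(z t) + θ)/u t, -(z t) - t/2]).mulVec (Y l t))
    (hYt : ∀ l t : ℂ,
      (fun i => deriv (fun s => Y l s i) t) =
        ((l/2) • (!![1,0; 0,-1] : Matrix (Fin 2) (Fin 2) ℂ) +
          (1/2 : ℂ) • !![0, u t; -2*z t/u t, 0]).mulVec (Y l t))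
    (M : ℂ → ℂ → Fin 2 → ℂ)
    (hM : ∀ l t : ℂ,
      M l t = ((!![l + y t, 1; 1, 0] : Matrix (Fin 2) (Fin 2) ℂ) *
        !![(v t)⁻¹, 0; 0, v t]).mulVec (Y l t)) :
    (∀ l t : ℂ,
      (fun i => deriv (fun w => M w t i) l) =
        (l^3 • (!![0,1; 0,0] : Matrix (Fin 2) (Fin 2) ℂ) +
          l^2 • (!![0, y t; 0, 0] : Matrix (Fin 2) (Fin 2) ℂ) +
          l • (!![0, (y t)^2 + t; 1, 0] : Matrix (Fin 2) (Fin 2) ℂ) +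
          !![-deriv y t, (y t)^3 + t*(y t) + 2*α;
            -y t, deriv y t]).mulVec (M l t)) ∧
    (∀ l t : ℂ,
      (fun i => deriv (fun s => M l s i) t) =
        ((l^2/2) • (!![0,1; 0,0] : Matrix (Fin 2) (Fin 2) ℂ) +
          l • (!![0, y t; 0, 0] : Matrix (Fin 2) (Fin 2) ℂ) +
          !![0, (3*(y t)^2 + t)/2; 1/2, 0]).mulVec (M l t)) := by
  have hY_lam (l t : ℂ) :
      HasDerivAt (fun w => Y w t) (jimboMiwaLambda θ (u t) (y t) (z t) l t *ᵥ Y l t) l :=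
    hasDerivAt_pi_of_deriv_eq (fun i => (hYdiff i).differentiableAt.comp l
      (differentiableAt_id.prodMk (differentiableAt_const t))) (hYlam l t)
  have hY_time (l t : ℂ) : HasDerivAt (Y l) (jimboMiwaTime (u t) (z t) l *ᵥ Y l t) t :=
    hasDerivAt_pi_of_deriv_eq (fun i => (hYdiff i).differentiableAt.comp t
      ((differentiableAt_const l).prodMk differentiableAt_id)) (hYt l t)
  obtain rfl : M = fun l t => conteMusetteGauge (y t) (v t) l *ᵥ Y l t := funext₂ hM
  refine ⟨fun l t => funext fun i => ?_, fun l t => funext fun i => ?_⟩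
  · have h := (hY_lam l t).gauge_transform
      (hasEntrywiseDerivAt_conteMusetteGauge_lambda (y t) (v t) l)
      (conteMusetteGauge_lambda_eq hθ (hz t) (hv0 t) (hu t))
    exact (hasDerivAt_pi.1 h i).deriv
  · have h := (hY_time l t).gauge_transform
      (hasEntrywiseDerivAt_conteMusetteGauge_time l (hy t).hasDerivAt (hv t).hasDerivAt (hv0 t))
      (conteMusetteGauge_time_eq (hz t) (hv0 t) (hu t) (hv' t))
    exact (hasDerivAt_pi.1 h i).deriv

/-- The gauge transformation `M := [[λ+y,1],[1,0]]·diag(1/v, v)·Y`, with `v' = −yv/2`,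
`u = v²`, maps a holomorphic solution `Y` of the Jimbo–Miwa pair `JM₂` with parameter
`θ = 1/2 − α` (where `y` solves `P₂` with parameter `α` and `z = y' − y² − t/2`) to a
solution `M` of the Conte–Musette pair `CM₂`. -/
theorem stmt_19 (α θ : ℂ) (hθ : θ = 1/2 - α)
    (y : ℂ → ℂ) (hy : Differentiable ℂ y)
    (hP2 : ∀ t : ℂ, deriv (deriv y) t = 2*(y t)^3 + t*(y t) + α)
    (z : ℂ → ℂ) (hz : ∀ t : ℂ, z t = deriv y t - (y t)^2 - t/2)
    (v : ℂ → ℂ) (hv : Differentiable ℂ v) (hv0 : ∀ t : ℂ, v t ≠ 0)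
    (hv' : ∀ t : ℂ, deriv v t = -(1/2) * y t * v t)
    (u : ℂ → ℂ) (hu : ∀ t : ℂ, u t = (v t)^2)
    (Y : ℂ → ℂ → Fin 2 → ℂ)
    (hYdiff : ∀ i, Differentiable ℂ (fun p : ℂ × ℂ => Y p.1 p.2 i))
    (hYlam : ∀ l t : ℂ,
      (fun i => deriv (fun w => Y w t i) l) =
        (l^2 • (!![1,0; 0,-1] : Matrix (Fin 2) (Fin 2) ℂ) +
          l • !![0, u t; -2*z t/u t, 0] +
          !![z t + t/2, -(u t)*(y t);
            -2*((y t)*(z t) + θ)/u t, -(z t) - t/2]).mulVec (Y l t))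
    (hYt : ∀ l t : ℂ,
      (fun i => deriv (fun s => Y l s i) t) =
        ((l/2) • (!![1,0; 0,-1] : Matrix (Fin 2) (Fin 2) ℂ) +
          (1/2 : ℂ) • !![0, u t; -2*z t/u t, 0]).mulVec (Y l t))
    (M : ℂ → ℂ → Fin 2 → ℂ)
    (hM : ∀ l t : ℂ,
      M l t = ((!![l + y t, 1; 1, 0] : Matrix (Fin 2) (Fin 2) ℂ) *
        !![(v t)⁻¹, 0; 0, v t]).mulVec (Y l t)) :
    (∀ l t : ℂ,
      (fun i => deriv (fun w => M w t i) l) =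
        (l^3 • (!![0,1; 0,0] : Matrix (Fin 2) (Fin 2) ℂ) +
          l^2 • (!![0, y t; 0, 0] : Matrix (Fin 2) (Fin 2) ℂ) +
          l • (!![0, (y t)^2 + t; 1, 0] : Matrix (Fin 2) (Fin 2) ℂ) +
          !![-deriv y t, (y t)^3 + t*(y t) + 2*α;
            -y t, deriv y t]).mulVec (M l t)) ∧
    (∀ l t : ℂ,
      (fun i => deriv (fun s => M l s i) t) =
        ((l^2/2) • (!![0,1; 0,0] : Matrix (Fin 2) (Fin 2) ℂ) +
          l • (!![0, y t; 0, 0] : Matrix (Fin 2) (Fin 2) ℂ) +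
          !![0, (3*(y t)^2 + t)/2; 1/2, 0]).mulVec (M l t)) :=
  stmt_19_general α θ hθ y hy z hz v hv hv0 hv' u hu Y hYdiff hYlam hYt M hM
end
end
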